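/- arXiv:cs/0610145 — 4 statements merged into one kernel-verified Lean document; each statement's English description precedes it below -/
import Mathlib

section
/- For any binary hypothesis testing scheme over a DMC with feedback with stopping time T satisfying E[T] < ∞, the divergence between the output distributions under the two hypotheses satisfies D(P_A || P_N) ≤ C_1 · E[T | A], where C_1 = max_{x,x'} D(p(·|x) || p(·|x')). -/
/-!
Write `L_A n`, `L_N n` for the likelihoods of the first `n` outputs. Given a prefix, the next
output has law `p(·|x_A)` under `A`, so by the chain rule the children of a node increase
`L_A log (L_A / L_N)` in total by `L_A · D(p(·|x_A) ‖ p(·|x_N)) ≤ C₁ L_A`. Telescoping over the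
observation tree truncated at depth `N`, the divergence carried by the leaves of depth `< N` is the
accumulated drift, at most `C₁ E[min(T, N) | A]`, minus the divergence carried by the nodes of
depth `N` where the test is still running. Since `a log (a / b) ≥ a - b`, the latter is at least
`-P_N(T ≥ N)`, which tends to `0`.
-/

open MeasureTheory
open scoped BigOperators

/-- The cylinder set of output sequences agreeing with `v` on the first `n` coordinates. -/
def cylinder {Y : Type*} (n : ℕ) (v : ℕ → Y) : Set (ℕ → Y) :=
  {ω | ∀ i < n, ω i = v i}

/-- The set of output sequences stopped by `S` at the leaf `s` of the observation tree. -/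
def stopCell {Y : Type*} (S : (ℕ → Y) → ℕ) (s : Σ n, Fin n → Y) : Set (ℕ → Y) :=
  {ω | S ω = s.1 ∧ ∀ i : Fin s.1, ω i = s.2 i}

open Finset Filter Topology

namespace FeedbackTest

section Stopping

variable {Y : Type*} {T : (ℕ → Y) → ℕ}

theorem dependsOn_le_of_stop (hT : ∀ n, DependsOn (fun ω => T ω = n) (Set.Iio n)) (n : ℕ) :
    DependsOn (fun ω => n ≤ T ω) (Set.Iio n) := by
  intro ω ω' h
  have key : ∀ m < n, (T ω = m ↔ T ω' = m) := fun m hm =>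
    (hT m fun i hi => h i (Set.mem_Iio.2 ((Set.mem_Iio.1 hi).trans hm))).to_iff
  refine propext ⟨fun hle => ?_, fun hle => ?_⟩ <;> by_contra! hlt
  · have := (key _ hlt).2 rfl; omega
  · have := (key _ hlt).1 rfl; omega

theorem dependsOn_lt_of_stop (hT : ∀ n, DependsOn (fun ω => T ω = n) (Set.Iio n)) (n : ℕ) :
    DependsOn (fun ω => n < T ω) (Set.Iio n) := by
  intro ω ω' h
  simp only [lt_iff_le_and_ne, ne_comm (a := n), Ne, dependsOn_le_of_stop hT n h, hT n h]

end Stopping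

section NatValued

variable {α : Type*} [MeasurableSpace α] {μ : Measure α} [IsFiniteMeasure μ] {T : α → ℕ}

theorem sum_mul_measureReal_le_integral {ι : Type*} (s : Finset ι) (c : ι → ℝ)
    {A : ι → Set α} (hA : ∀ i, MeasurableSet (A i)) {g : α → ℝ} (hg : Integrable g μ)
    (h : ∀ ω, ∑ i ∈ s, (A i).indicator (fun _ => c i) ω ≤ g ω) :
    ∑ i ∈ s, c i * μ.real (A i) ≤ ∫ ω, g ω ∂μ := by
  have hint : ∀ i, Integrable ((A i).indicator fun _ => c i) μ := fun i =>
    (integrable_const _).indicator (hA i)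
  calc ∑ i ∈ s, c i * μ.real (A i) = ∫ ω, ∑ i ∈ s, (A i).indicator (fun _ => c i) ω ∂μ := by
        rw [integral_finsetSum _ fun i _ => hint i]
        exact sum_congr rfl fun i _ => by
          rw [integral_indicator_const _ (hA i), smul_eq_mul, mul_comm]
    _ ≤ ∫ ω, g ω ∂μ := integral_mono (integrable_finsetSum _ fun i _ => hint i) hg h

theorem sum_measureReal_lt_le_integral (hT : Measurable T)
    (hint : Integrable (fun ω => (T ω : ℝ)) μ) (N : ℕ) :
    ∑ n ∈ range N, μ.real {ω | n < T ω} ≤ ∫ ω, (T ω : ℝ) ∂μ := by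
  have hcount : ∀ ω, ∑ n ∈ range N, {ω | n < T ω}.indicator (fun _ => (1 : ℝ)) ω ≤ T ω :=
    fun ω => by
      simp only [Set.indicator_apply, Set.mem_ofPred_eq, sum_boole]
      exact_mod_cast (card_le_card fun n hn => by simp_all).trans (card_range (T ω)).le
  simpa using sum_mul_measureReal_le_integral (range N) (fun _ => 1)
    (A := fun n => {ω | n < T ω}) (fun n => hT measurableSet_Ioi) hint hcount

theorem summable_mul_measureReal_eq (hT : Measurable T)
    (hint : Integrable (fun ω => (T ω : ℝ)) μ) :
    Summable fun n : ℕ => (n : ℝ) * μ.real {ω | T ω = n} := by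
  have hvalue : ∀ N ω, ∑ n ∈ range N, {ω | T ω = n}.indicator (fun _ => (n : ℝ)) ω ≤ T ω :=
    fun N ω => by
      simp only [Set.indicator_apply, Set.mem_ofPred_eq, sum_ite_eq]
      split_ifs <;> simp
  exact summable_of_sum_range_le (fun n => by positivity) fun N =>
    sum_mul_measureReal_le_integral (range N) (fun n => (n : ℝ))
      (A := fun n => {ω | T ω = n}) (fun n => hT (measurableSet_singleton n)) hint (hvalue N)

theorem tendsto_measureReal_le_atTop_zero (hT : Measurable T) :
    Tendsto (fun N : ℕ => μ.real {ω | N ≤ T ω}) atTop (𝓝 0) := by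
  have h := tendsto_measure_iInter_atTop (μ := μ) (s := fun N : ℕ => {ω | N ≤ T ω})
    (fun N => (hT (measurableSet_Ici (a := N))).nullMeasurableSet)
    (fun a b hab ω hω => hab.trans hω) ⟨0, measure_ne_top μ _⟩
  have hempty : ⋂ N : ℕ, {ω | N ≤ T ω} = ∅ := Set.eq_empty_of_forall_notMem fun ω hω =>
    (Set.mem_iInter.1 hω (T ω + 1)).not_gt (Nat.lt_succ_self _)
  rw [hempty, measure_empty] at h
  exact (ENNReal.tendsto_toReal ENNReal.zero_ne_top).comp h

end NatValued

section Prefixes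

variable {X Y : Type*}

def take (n : ℕ) (ω : ℕ → Y) : Fin n → Y := fun i => ω i

variable [Nonempty Y]

-- The padding beyond `n` never matters: `extend n u` is only fed to functions depending on the
-- first `n` coordinates.
noncomputable def extend (n : ℕ) (u : Fin n → Y) : ℕ → Y :=
  fun i => if h : i < n then u ⟨i, h⟩ else Classical.arbitrary Y

theorem extend_of_lt {n i : ℕ} (u : Fin n → Y) (h : i < n) : extend n u i = u ⟨i, h⟩ :=
  dif_pos h

@[simp]
theorem take_extend (n : ℕ) (u : Fin n → Y) : take n (extend n u) = u :=
  funext fun i => extend_of_lt u i.isLt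

theorem extend_snoc_of_lt {n i : ℕ} (u : Fin n → Y) (y : Y) (h : i < n) :
    extend (n + 1) (Fin.snoc u y) i = extend n u i := by
  rw [extend_of_lt _ (h.trans n.lt_succ_self), extend_of_lt u h]
  simp [Fin.snoc, h]

theorem extend_snoc_self (n : ℕ) (u : Fin n → Y) (y : Y) :
    extend (n + 1) (Fin.snoc u y) n = y := by
  rw [extend_of_lt _ n.lt_succ_self]
  simp [Fin.snoc]

@[simp]
theorem take_extend_snoc (n : ℕ) (u : Fin n → Y) (y : Y) :
    take n (extend (n + 1) (Fin.snoc u y)) = u :=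
  funext fun i => (extend_snoc_of_lt u y i.isLt).trans (extend_of_lt u i.isLt)

theorem sum_extend_succ [Fintype Y] {β : Type*} [AddCommMonoid β] (n : ℕ) (H : (ℕ → Y) → β) :
    ∑ w : Fin (n + 1) → Y, H (extend (n + 1) w) =
      ∑ u : Fin n → Y, ∑ y, H (extend (n + 1) (Fin.snoc u y)) := by
  rw [← (Fin.snocEquiv fun _ => Y).sum_comp, Fintype.sum_prod_type, Finset.sum_comm]
  rfl

theorem cylinder_extend (n : ℕ) (u : Fin n → Y) :
    _root_.cylinder n (extend n u) = take n ⁻¹' {u} := by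
  ext ω
  simp only [_root_.cylinder, Set.mem_preimage, Set.mem_singleton_iff, funext_iff,
    take, Fin.forall_iff]
  exact forall₂_congr fun i hi => by rw [extend_of_lt u hi]

theorem preimage_take_setOf_extend_mem {n : ℕ} {S : Set (ℕ → Y)}
    (hS : DependsOn (· ∈ S) (Set.Iio n)) : take n ⁻¹' {u | extend n u ∈ S} = S := by
  ext ω
  exact (hS fun i hi => extend_of_lt _ (Set.mem_Iio.1 hi)).to_iff

theorem stopCell_eq {T : (ℕ → Y) → ℕ} (hT : ∀ n, DependsOn (fun ω => T ω = n) (Set.Iio n))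
    (n : ℕ) (u : Fin n → Y) :
    stopCell T ⟨n, u⟩ = if T (extend n u) = n then take n ⁻¹' {u} else ∅ := by
  have hagree : ∀ ω, take n ω = u ↔ ∀ i ∈ Set.Iio n, ω i = extend n u i := fun ω => by
    simp only [funext_iff, take, Fin.forall_iff, Set.mem_Iio]
    exact forall₂_congr fun i hi => by rw [extend_of_lt u hi]
  ext ω
  have hω : ω ∈ stopCell T ⟨n, u⟩ ↔ T ω = n ∧ take n ω = u := by
    simp [stopCell, take, funext_iff]
  rw [hω]
  split_ifs with h
  · exact ⟨And.right, fun hu => ⟨(hT n ((hagree ω).1 hu)).mpr h, hu⟩⟩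
  · exact iff_of_false (fun ⟨hT', hu⟩ => h ((hT n ((hagree ω).1 hu)).mp hT')) id

end Prefixes

section Likelihood

variable {X Y : Type*} (p : X → Y → ℝ) (g : (n : ℕ) → (Fin n → Y) → X)

def likelihood (n : ℕ) (v : ℕ → Y) : ℝ :=
  ∏ k ∈ range n, p (g k (take k v)) (v k)

def IsOutputLaw [MeasurableSpace Y] (μ : Measure (ℕ → Y)) : Prop :=
  ∀ n v, μ (_root_.cylinder (n + 1) v) =
    μ (_root_.cylinder n v) * ENNReal.ofReal (p (g n (take n v)) (v n))

variable {p g}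

theorem likelihood_nonneg (hp : ∀ x y, 0 ≤ p x y) (n : ℕ) (v : ℕ → Y) :
    0 ≤ likelihood p g n v :=
  prod_nonneg fun _ _ => hp _ _

theorem likelihood_pos (hp : ∀ x y, 0 < p x y) (n : ℕ) (v : ℕ → Y) :
    0 < likelihood p g n v :=
  prod_pos fun _ _ => hp _ _

theorem likelihood_succ (n : ℕ) (v : ℕ → Y) :
    likelihood p g (n + 1) v = likelihood p g n v * p (g n (take n v)) (v n) :=
  prod_range_succ _ _

theorem dependsOn_likelihood (n : ℕ) : DependsOn (likelihood p g n) (Set.Iio n) := by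
  intro v w h
  refine prod_congr rfl fun k hk => ?_
  have hk : k < n := mem_range.1 hk
  rw [show take k v = take k w from funext fun i => h i (Set.mem_Iio.2 (i.isLt.trans hk)),
    h k hk]

theorem likelihood_extend_snoc [Nonempty Y] (n : ℕ) (u : Fin n → Y) (y : Y) :
    likelihood p g (n + 1) (extend (n + 1) (Fin.snoc u y)) =
      likelihood p g n (extend n u) * p (g n u) y := by
  rw [likelihood_succ, take_extend_snoc, extend_snoc_self,
    dependsOn_likelihood n fun i hi => extend_snoc_of_lt u y hi]

theorem IsOutputLaw.measure_cylinder [MeasurableSpace Y] {μ : Measure (ℕ → Y)}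
    [IsProbabilityMeasure μ] (hμ : IsOutputLaw p g μ) (hp : ∀ x y, 0 ≤ p x y) :
    ∀ n v, μ (_root_.cylinder n v) = ENNReal.ofReal (likelihood p g n v)
  | 0, v => by simp [_root_.cylinder, likelihood]
  | n + 1, v => by
    rw [hμ, hμ.measure_cylinder hp n, likelihood_succ,
      ENNReal.ofReal_mul (likelihood_nonneg hp n v)]

end Likelihood

section PrefixSum

variable {Y : Type*} [Fintype Y] [Nonempty Y]

noncomputable def prefixSum (n : ℕ) (S : Set (ℕ → Y)) (F : (ℕ → Y) → ℝ) : ℝ :=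
  ∑ u : Fin n → Y, S.indicator F (extend n u)

theorem prefixSum_add (n : ℕ) (S : Set (ℕ → Y)) (F G : (ℕ → Y) → ℝ) :
    prefixSum n S (F + G) = prefixSum n S F + prefixSum n S G := by
  simp only [prefixSum, Set.indicator_add', Pi.add_apply, sum_add_distrib]

theorem prefixSum_sub (n : ℕ) (S : Set (ℕ → Y)) (F G : (ℕ → Y) → ℝ) :
    prefixSum n S (F - G) = prefixSum n S F - prefixSum n S G := by
  simp only [prefixSum, Set.indicator_sub', Pi.sub_apply, sum_sub_distrib]

theorem prefixSum_const_mul (n : ℕ) (S : Set (ℕ → Y)) (C : ℝ) (F : (ℕ → Y) → ℝ) :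
    prefixSum n S (fun v => C * F v) = C * prefixSum n S F := by
  simp only [prefixSum, mul_sum, ← Set.indicator_const_mul]

theorem prefixSum_union {S S' : Set (ℕ → Y)} (h : Disjoint S S') (n : ℕ) (F : (ℕ → Y) → ℝ) :
    prefixSum n (S ∪ S') F = prefixSum n S F + prefixSum n S' F := by
  simp only [prefixSum, Set.indicator_union_of_disjoint h, sum_add_distrib]

theorem prefixSum_mono {F G : (ℕ → Y) → ℝ} (h : F ≤ G) (n : ℕ) (S : Set (ℕ → Y)) :
    prefixSum n S F ≤ prefixSum n S G :=
  sum_le_sum fun _ _ => Set.indicator_le_indicator (h _)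

end PrefixSum

section OutputLaw

variable {X Y : Type*} [MeasurableSpace Y]

theorem measurable_take (n : ℕ) : Measurable (take (Y := Y) n) :=
  measurable_pi_lambda _ fun i => measurable_pi_apply (i : ℕ)

theorem measurableSet_of_dependsOn [Finite Y] [Nonempty Y] [MeasurableSingletonClass Y] {n : ℕ}
    {S : Set (ℕ → Y)} (hS : DependsOn (· ∈ S) (Set.Iio n)) : MeasurableSet S := by
  rw [← preimage_take_setOf_extend_mem hS]
  exact measurable_take n (Set.toFinite _).measurableSet

variable [Nonempty Y] {p : X → Y → ℝ} {g : (n : ℕ) → (Fin n → Y) → X} {μ : Measure (ℕ → Y)}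
  [IsProbabilityMeasure μ]

theorem IsOutputLaw.measureReal_take_preimage (hμ : IsOutputLaw p g μ) (hp : ∀ x y, 0 ≤ p x y)
    (n : ℕ) (u : Fin n → Y) :
    μ.real (take n ⁻¹' {u}) = likelihood p g n (extend n u) := by
  rw [← cylinder_extend, measureReal_def, hμ.measure_cylinder hp,
    ENNReal.toReal_ofReal (likelihood_nonneg hp _ _)]

theorem IsOutputLaw.measureReal_eq_prefixSum [Fintype Y] [MeasurableSingletonClass Y]
    (hμ : IsOutputLaw p g μ) (hp : ∀ x y, 0 ≤ p x y)
    {n : ℕ} {S : Set (ℕ → Y)} (hS : DependsOn (· ∈ S) (Set.Iio n)) :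
    μ.real S = prefixSum n S (likelihood p g n) := by
  classical
  have hfilter : {u | extend n u ∈ S} = ↑(univ.filter fun u : Fin n → Y => extend n u ∈ S) := by
    simp
  conv_lhs => rw [← preimage_take_setOf_extend_mem hS, hfilter]
  rw [← sum_measureReal_preimage_singleton _
      fun u _ => measurable_take n (measurableSet_singleton u), sum_filter, prefixSum]
  refine sum_congr rfl fun u _ => ?_
  rw [Set.indicator_apply, hμ.measureReal_take_preimage hp]

theorem IsOutputLaw.measureReal_stopCell (hμ : IsOutputLaw p g μ) (hp : ∀ x y, 0 ≤ p x y)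
    {T : (ℕ → Y) → ℕ} (hT : ∀ n, DependsOn (fun ω => T ω = n) (Set.Iio n))
    (n : ℕ) (u : Fin n → Y) :
    μ.real (stopCell T ⟨n, u⟩) = {ω | T ω = n}.indicator (likelihood p g n) (extend n u) := by
  rw [stopCell_eq hT]
  by_cases h : T (extend n u) = n
  · rw [if_pos h, Set.indicator_of_mem (s := {ω | T ω = n}) h, hμ.measureReal_take_preimage hp]
  · rw [if_neg h, Set.indicator_of_notMem (s := {ω | T ω = n}) h, measureReal_empty]

end OutputLaw

section KLSummand

variable {X Y : Type*} (p : X → Y → ℝ) (gA gN : (n : ℕ) → (Fin n → Y) → X)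

noncomputable def klSummand (n : ℕ) (v : ℕ → Y) : ℝ :=
  likelihood p gA n v * Real.log (likelihood p gA n v / likelihood p gN n v)

variable {p gA gN}

@[simp]
theorem klSummand_zero : klSummand p gA gN 0 = 0 := by
  ext v
  simp [klSummand, likelihood]

theorem sub_le_klSummand (hp : ∀ x y, 0 < p x y) (n : ℕ) (v : ℕ → Y) :
    likelihood p gA n v - likelihood p gN n v ≤ klSummand p gA gN n v := by
  have ha := likelihood_pos (g := gA) hp n v
  have hb := likelihood_pos (g := gN) hp n v
  have h := Real.one_sub_inv_le_log_of_pos (div_pos ha hb)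
  rw [inv_div] at h
  calc likelihood p gA n v - likelihood p gN n v
      = likelihood p gA n v * (1 - likelihood p gN n v / likelihood p gA n v) := by
        field_simp
    _ ≤ klSummand p gA gN n v := mul_le_mul_of_nonneg_left h ha.le

theorem abs_log_likelihood_div_le (hp : ∀ x y, 0 < p x y) {M : ℝ}
    (hM : ∀ x x' y, |Real.log (p x y / p x' y)| ≤ M) (n : ℕ) (v : ℕ → Y) :
    |Real.log (likelihood p gA n v / likelihood p gN n v)| ≤ n * M := by
  rw [likelihood, likelihood, ← prod_div_distrib,
    Real.log_prod fun k _ => (div_pos (hp _ _) (hp _ _)).ne']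
  calc |∑ k ∈ range n, Real.log (p (gA k (take k v)) (v k) / p (gN k (take k v)) (v k))|
      ≤ ∑ k ∈ range n, |Real.log (p (gA k (take k v)) (v k) / p (gN k (take k v)) (v k))| :=
        abs_sum_le_sum_abs _ _
    _ ≤ ∑ _k ∈ range n, M := sum_le_sum fun k _ => hM _ _ _
    _ = n * M := by simp

end KLSummand

section Divergence

variable {X Y : Type*} [Fintype Y] (p : X → Y → ℝ) (gA gN : (n : ℕ) → (Fin n → Y) → X)

noncomputable def divergence (x x' : X) : ℝ :=
  ∑ y, p x y * Real.log (p x y / p x' y)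

noncomputable def klIncrement (n : ℕ) (v : ℕ → Y) : ℝ :=
  likelihood p gA n v * divergence p (gA n (take n v)) (gN n (take n v))

variable {p gA gN}

theorem divergence_self (x : X) : divergence p x x = 0 :=
  sum_eq_zero fun y _ => by rcases eq_or_ne (p x y) 0 with h | h <;> simp [h]

theorem klIncrement_le (hp : ∀ x y, 0 ≤ p x y) {C : ℝ} (hC : ∀ x x', divergence p x x' ≤ C)
    (n : ℕ) (v : ℕ → Y) : klIncrement p gA gN n v ≤ C * likelihood p gA n v := by
  rw [klIncrement, mul_comm C]
  exact mul_le_mul_of_nonneg_left (hC _ _) (likelihood_nonneg hp n v)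

theorem sum_klSummand_extend_snoc [Nonempty Y] (hp : ∀ x y, 0 < p x y)
    (hsum : ∀ x, ∑ y, p x y = 1) (n : ℕ) (u : Fin n → Y) :
    ∑ y, klSummand p gA gN (n + 1) (extend (n + 1) (Fin.snoc u y)) =
      klSummand p gA gN n (extend n u) + klIncrement p gA gN n (extend n u) := by
  simp only [klSummand, klIncrement, likelihood_extend_snoc, take_extend, divergence]
  set a := likelihood p gA n (extend n u)
  set b := likelihood p gN n (extend n u)
  have ha : 0 < a := likelihood_pos hp n _
  have hb : 0 < b := likelihood_pos hp n _
  have hy : ∀ y, a * p (gA n u) y * Real.log (a * p (gA n u) y / (b * p (gN n u) y)) =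
      a * Real.log (a / b) * p (gA n u) y +
        a * (p (gA n u) y * Real.log (p (gA n u) y / p (gN n u) y)) := fun y => by
    have := hp (gA n u) y
    have := hp (gN n u) y
    rw [mul_div_mul_comm, Real.log_mul (by positivity) (by positivity)]
    ring
  simp only [hy, sum_add_distrib, ← mul_sum, hsum, mul_one]

end Divergence

section StopCell

variable {X Y : Type*} [Nonempty Y] [MeasurableSpace Y] {p : X → Y → ℝ}
  {gA gN : (n : ℕ) → (Fin n → Y) → X} {μA μN : Measure (ℕ → Y)} [IsProbabilityMeasure μA]
  [IsProbabilityMeasure μN] {T : (ℕ → Y) → ℕ}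

theorem measureReal_stopCell_mul_log (hp : ∀ x y, 0 ≤ p x y) (hA : IsOutputLaw p gA μA)
    (hN : IsOutputLaw p gN μN) (hT : ∀ n, DependsOn (fun ω => T ω = n) (Set.Iio n)) (n : ℕ)
    (u : Fin n → Y) :
    μA.real (stopCell T ⟨n, u⟩) *
        Real.log (μA.real (stopCell T ⟨n, u⟩) / μN.real (stopCell T ⟨n, u⟩)) =
      {ω | T ω = n}.indicator (klSummand p gA gN n) (extend n u) := by
  rw [hA.measureReal_stopCell hp hT, hN.measureReal_stopCell hp hT]
  by_cases h : extend n u ∈ {ω | T ω = n}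
  · simp only [Set.indicator_of_mem h, klSummand]
  · simp only [Set.indicator_of_notMem h, zero_mul]

end StopCell

section Telescoping

variable {X Y : Type*} [Fintype Y] [Nonempty Y] {p : X → Y → ℝ}
  {gA gN : (n : ℕ) → (Fin n → Y) → X} {T : (ℕ → Y) → ℕ}

theorem prefixSum_klSummand_succ (hp : ∀ x y, 0 < p x y) (hsum : ∀ x, ∑ y, p x y = 1)
    (hT : ∀ n, DependsOn (fun ω => T ω = n) (Set.Iio n)) (n : ℕ) :
    prefixSum (n + 1) {ω | n + 1 ≤ T ω} (klSummand p gA gN (n + 1)) =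
      prefixSum n {ω | n < T ω} (klSummand p gA gN n + klIncrement p gA gN n) := by
  rw [prefixSum, sum_extend_succ, prefixSum]
  refine sum_congr rfl fun u _ => ?_
  have hmem : ∀ y, extend (n + 1) (Fin.snoc u y) ∈ {ω | n + 1 ≤ T ω} ↔
      extend n u ∈ {ω | n < T ω} := fun y =>
    (dependsOn_lt_of_stop hT n fun i hi => extend_snoc_of_lt u y hi).to_iff
  by_cases hu : extend n u ∈ {ω | n < T ω}
  · simp only [Set.indicator_of_mem ((hmem _).2 hu), Set.indicator_of_mem hu, Pi.add_apply]
    exact sum_klSummand_extend_snoc hp hsum n u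
  · simp only [Set.indicator_of_notMem (mt (hmem _).1 hu), Set.indicator_of_notMem hu,
      sum_const_zero]

theorem sum_prefixSum_klSummand_stop (hp : ∀ x y, 0 < p x y) (hsum : ∀ x, ∑ y, p x y = 1)
    (hT : ∀ n, DependsOn (fun ω => T ω = n) (Set.Iio n)) (N : ℕ) :
    ∑ n ∈ range N, prefixSum n {ω | T ω = n} (klSummand p gA gN n) =
      ∑ n ∈ range N, prefixSum n {ω | n < T ω} (klIncrement p gA gN n) -
        prefixSum N {ω | N ≤ T ω} (klSummand p gA gN N) := by
  have hstep : ∀ n, prefixSum n {ω | T ω = n} (klSummand p gA gN n) =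
      (prefixSum n {ω | n ≤ T ω} (klSummand p gA gN n) -
        prefixSum (n + 1) {ω | n + 1 ≤ T ω} (klSummand p gA gN (n + 1))) +
      prefixSum n {ω | n < T ω} (klIncrement p gA gN n) := fun n => by
    have hsplit : {ω | n ≤ T ω} = {ω | T ω = n} ∪ {ω | n < T ω} := by
      ext ω
      simp only [Set.mem_union, Set.mem_ofPred_eq]
      omega
    have hdisj : Disjoint {ω | T ω = n} {ω | n < T ω} :=
      Set.disjoint_left.2 fun ω (h : T ω = n) (h' : n < T ω) => h'.ne' h
    rw [prefixSum_klSummand_succ hp hsum hT, prefixSum_add, hsplit, prefixSum_union hdisj]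
    ring
  have hroot : prefixSum 0 {ω | 0 ≤ T ω} (klSummand p gA gN 0) = 0 := by
    simp [prefixSum, klSummand_zero]
  rw [sum_congr rfl fun n _ => hstep n, sum_add_distrib, sum_range_sub', hroot]
  ring

end Telescoping

section Bound

variable {X Y : Type*} [Fintype Y] [Nonempty Y] [MeasurableSpace Y] [MeasurableSingletonClass Y]
  {p : X → Y → ℝ} {gA gN : (n : ℕ) → (Fin n → Y) → X} {μA μN : Measure (ℕ → Y)}
  [IsProbabilityMeasure μA] [IsProbabilityMeasure μN] {T : (ℕ → Y) → ℕ}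

theorem measurable_of_stop (hT : ∀ n, DependsOn (fun ω => T ω = n) (Set.Iio n)) :
    Measurable T :=
  measurable_to_countable' fun n => measurableSet_of_dependsOn (hT n)

theorem sum_prefixSum_klSummand_stop_le (hp : ∀ x y, 0 < p x y) (hsum : ∀ x, ∑ y, p x y = 1)
    (hA : IsOutputLaw p gA μA) (hN : IsOutputLaw p gN μN)
    (hT : ∀ n, DependsOn (fun ω => T ω = n) (Set.Iio n))
    (hTA : Integrable (fun ω => (T ω : ℝ)) μA) {C : ℝ} (hC : ∀ x x', divergence p x x' ≤ C)
    (hC0 : 0 ≤ C) (N : ℕ) :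
    ∑ n ∈ range N, prefixSum n {ω | T ω = n} (klSummand p gA gN n) ≤
      μN.real {ω | N ≤ T ω} + C * ∫ ω, (T ω : ℝ) ∂μA := by
  have hp' : ∀ x y, 0 ≤ p x y := fun x y => (hp x y).le
  have hlive : μA.real {ω | N ≤ T ω} - μN.real {ω | N ≤ T ω} ≤
      prefixSum N {ω | N ≤ T ω} (klSummand p gA gN N) := by
    rw [hA.measureReal_eq_prefixSum hp' (S := {ω | N ≤ T ω}) (dependsOn_le_of_stop hT N),
      hN.measureReal_eq_prefixSum hp' (S := {ω | N ≤ T ω}) (dependsOn_le_of_stop hT N),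
      ← prefixSum_sub]
    exact prefixSum_mono (sub_le_klSummand hp N) N _
  have hdrift : ∀ n, prefixSum n {ω | n < T ω} (klIncrement p gA gN n) ≤
      C * μA.real {ω | n < T ω} := fun n => by
    rw [hA.measureReal_eq_prefixSum hp' (S := {ω | n < T ω}) (dependsOn_lt_of_stop hT n),
      ← prefixSum_const_mul]
    exact prefixSum_mono (klIncrement_le hp' hC n) n _
  have hsum_drift := sum_le_sum fun n (_ : n ∈ range N) => hdrift n
  rw [← mul_sum] at hsum_drift
  have htail := mul_le_mul_of_nonneg_left
    (sum_measureReal_lt_le_integral (measurable_of_stop hT) hTA N) hC0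
  have hnonneg : 0 ≤ μA.real {ω | N ≤ T ω} := measureReal_nonneg
  rw [sum_prefixSum_klSummand_stop hp hsum hT]
  linarith

theorem summable_klSummand_stop [Fintype X] (hp : ∀ x y, 0 < p x y) (hA : IsOutputLaw p gA μA)
    (hT : ∀ n, DependsOn (fun ω => T ω = n) (Set.Iio n))
    (hTA : Integrable (fun ω => (T ω : ℝ)) μA) :
    Summable fun s : Σ n, Fin n → Y =>
      {ω | T ω = s.1}.indicator (klSummand p gA gN s.1) (extend s.1 s.2) := by
  set M := ∑ z : X × X × Y, |Real.log (p z.1 z.2.2 / p z.2.1 z.2.2)|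
  have hM : ∀ x x' y, |Real.log (p x y / p x' y)| ≤ M := fun x x' y =>
    single_le_sum (f := fun z : X × X × Y => |Real.log (p z.1 z.2.2 / p z.2.1 z.2.2)|)
      (fun _ _ => abs_nonneg _) (mem_univ (x, x', y))
  have hM0 : 0 ≤ M := sum_nonneg fun _ _ => abs_nonneg _
  have hp' : ∀ x y, 0 ≤ p x y := fun x y => (hp x y).le
  refine Summable.of_norm_bounded (g := fun s : Σ n, Fin n → Y =>
      M * (s.1 * {ω | T ω = s.1}.indicator (likelihood p gA s.1) (extend s.1 s.2))) ?_ ?_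
  · refine (summable_sigma_of_nonneg fun s => mul_nonneg hM0 (mul_nonneg s.1.cast_nonneg
      (Set.indicator_nonneg (fun v _ => likelihood_nonneg hp' _ v) _))).2
      ⟨fun n => .of_finite, ?_⟩
    refine ((summable_mul_measureReal_eq (measurable_of_stop hT) hTA).mul_left M).congr
      fun n => ?_
    rw [tsum_fintype, hA.measureReal_eq_prefixSum hp' (S := {ω | T ω = n}) (hT n), prefixSum]
    simp only [mul_sum]
  · rintro ⟨n, u⟩
    by_cases h : extend n u ∈ {ω | T ω = n}
    · have hL := likelihood_pos (g := gA) hp n (extend n u)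
      rw [Set.indicator_of_mem h, Set.indicator_of_mem h, Real.norm_eq_abs, klSummand, abs_mul,
        abs_of_pos hL]
      calc likelihood p gA n (extend n u) * |Real.log (likelihood p gA n (extend n u) /
            likelihood p gN n (extend n u))|
          ≤ likelihood p gA n (extend n u) * (n * M) :=
            mul_le_mul_of_nonneg_left (abs_log_likelihood_div_le hp hM n _) hL.le
        _ = M * (n * likelihood p gA n (extend n u)) := by ring
    · simp [Set.indicator_of_notMem h]

theorem tsum_klSummand_stop_le [Fintype X] (hp : ∀ x y, 0 < p x y) (hsum : ∀ x, ∑ y, p x y = 1)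
    (hA : IsOutputLaw p gA μA) (hN : IsOutputLaw p gN μN)
    (hT : ∀ n, DependsOn (fun ω => T ω = n) (Set.Iio n))
    (hTA : Integrable (fun ω => (T ω : ℝ)) μA) {C : ℝ} (hC : ∀ x x', divergence p x x' ≤ C)
    (hC0 : 0 ≤ C) :
    ∑' s : Σ n, Fin n → Y, {ω | T ω = s.1}.indicator (klSummand p gA gN s.1) (extend s.1 s.2) ≤
      C * ∫ ω, (T ω : ℝ) ∂μA := by
  have hs := summable_klSummand_stop (gN := gN) hp hA hT hTA
  have hlevels : HasSum (fun n => prefixSum n {ω | T ω = n} (klSummand p gA gN n))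
      (∑' s : Σ n, Fin n → Y,
        {ω | T ω = s.1}.indicator (klSummand p gA gN s.1) (extend s.1 s.2)) := by
    have h := hs.sigma.hasSum
    rw [hs.tsum_sigma]
    simp only [tsum_fintype] at h ⊢
    exact h
  have hlim := (tendsto_measureReal_le_atTop_zero (μ := μN) (measurable_of_stop hT)).add_const
    (C * ∫ ω, (T ω : ℝ) ∂μA)
  rw [zero_add] at hlim
  exact le_of_tendsto_of_tendsto' hlevels.tendsto_sum_nat hlim
    (sum_prefixSum_klSummand_stop_le hp hsum hA hN hT hTA hC hC0)

end Bound

end FeedbackTest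

open FeedbackTest

theorem stmt5_general {X Y : Type*} [Fintype X] [Fintype Y] [Nonempty X] [Nonempty Y]
    [MeasurableSpace Y] [MeasurableSingletonClass Y]
    (p : X → Y → ℝ) (hpos : ∀ x y, 0 < p x y) (hsum : ∀ x, ∑ y, p x y = 1)
    (f : Bool → (n : ℕ) → (Fin n → Y) → X)
    (μA μN : Measure (ℕ → Y)) [IsProbabilityMeasure μA] [IsProbabilityMeasure μN]
    (hA : ∀ (n : ℕ) (v : ℕ → Y),
      μA (cylinder (n + 1) v) =
        μA (cylinder n v) * ENNReal.ofReal (p (f true n fun i => v i) (v n)))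
    (hN : ∀ (n : ℕ) (v : ℕ → Y),
      μN (cylinder (n + 1) v) =
        μN (cylinder n v) * ENNReal.ofReal (p (f false n fun i => v i) (v n)))
    (T : (ℕ → Y) → ℕ)
    (hstop : ∀ (n : ℕ) (ω ω' : ℕ → Y), (∀ i < n, ω i = ω' i) → (T ω = n ↔ T ω' = n))
    (hTA : Integrable (fun ω => (T ω : ℝ)) μA) :
    (∑' s : Σ n, Fin n → Y,
        (μA (stopCell T s)).toReal *
          Real.log ((μA (stopCell T s)).toReal / (μN (stopCell T s)).toReal))
      ≤ (⨆ x, ⨆ x', ∑ y, p x y * Real.log (p x y / p x' y)) * ∫ ω, (T ω : ℝ) ∂μA := by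
  have hC : ∀ x x', divergence p x x' ≤ ⨆ x, ⨆ x', divergence p x x' := fun x x' =>
    le_ciSup_of_le (Set.finite_range _).bddAbove x (le_ciSup (Set.finite_range _).bddAbove x')
  have hC0 : 0 ≤ ⨆ x, ⨆ x', divergence p x x' :=
    (divergence_self (Classical.arbitrary X)).symm.le.trans (hC _ _)
  have hT : ∀ n, DependsOn (fun ω => T ω = n) (Set.Iio n) := fun n _ _ h =>
    propext (hstop n _ _ h)
  calc _ = ∑' s : Σ n, Fin n → Y,
          {ω | T ω = s.1}.indicator (klSummand p (f true) (f false) s.1) (extend s.1 s.2) :=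
        tsum_congr fun ⟨n, u⟩ =>
          measureReal_stopCell_mul_log (fun x y => (hpos x y).le) hA hN hT n u
    _ ≤ _ := tsum_klSummand_stop_le hpos hsum hA hN hT hTA hC hC0

/-- For any binary hypothesis testing scheme over a DMC with feedback, with stopping time `T`
of finite expectation, the divergence between the stopped output distributions under the two
hypotheses satisfies `D(P_A ‖ P_N) ≤ C₁ E[T | A]`, where
`C₁ = max_{x,x'} D(p(·|x) ‖ p(·|x'))`. -/
theorem stmt5 {X Y : Type*} [Fintype X] [Fintype Y] [Nonempty X] [Nonempty Y]
    [MeasurableSpace Y] [MeasurableSingletonClass Y]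
    (p : X → Y → ℝ) (hpos : ∀ x y, 0 < p x y) (hsum : ∀ x, ∑ y, p x y = 1)
    (f : Bool → (n : ℕ) → (Fin n → Y) → X)
    (μA μN : Measure (ℕ → Y)) [IsProbabilityMeasure μA] [IsProbabilityMeasure μN]
    (hA : ∀ (n : ℕ) (v : ℕ → Y),
      μA (cylinder (n + 1) v) =
        μA (cylinder n v) * ENNReal.ofReal (p (f true n fun i => v i) (v n)))
    (hN : ∀ (n : ℕ) (v : ℕ → Y),
      μN (cylinder (n + 1) v) =
        μN (cylinder n v) * ENNReal.ofReal (p (f false n fun i => v i) (v n)))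
    (T : (ℕ → Y) → ℕ)
    (hstop : ∀ (n : ℕ) (ω ω' : ℕ → Y), (∀ i < n, ω i = ω' i) → (T ω = n ↔ T ω' = n))
    (hTA : Integrable (fun ω => (T ω : ℝ)) μA)
    (hTN : Integrable (fun ω => (T ω : ℝ)) μN) :
    (∑' s : Σ n, Fin n → Y,
        (μA (stopCell T s)).toReal *
          Real.log ((μA (stopCell T s)).toReal / (μN (stopCell T s)).toReal))
      ≤ (⨆ x, ⨆ x', ∑ y, p x y * Real.log (p x y / p x' y)) * ∫ ω, (T ω : ℝ) ∂μA :=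
  stmt5_general p hpos hsum f μA μN hA hN T hstop hTA
end

section
/- Let P and Q be probability measures, S a measurable set, and suppose D(P||Q) ≤ K. Then K ≥ −P(S) ln Q(S) − h(P(S^c)), where h is the binary entropy function h(p) = −p ln p − (1−p) ln(1−p). -/
open MeasureTheory Classical

/-- Kullback-Leibler divergence between two measures, valued in `EReal`, equal to `⊤`
unless `P ≪ Q` and the log-likelihood ratio is integrable. -/

noncomputable def klDivM {Ω : Type*} [MeasurableSpace Ω] (P Q : Measure Ω) : EReal :=
  if P ≪ Q ∧ Integrable (llr P Q) P then ((∫ ω, llr P Q ω ∂P : ℝ) : EReal) else ⊤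

/-- The natural-log binary entropy function, with `h(0) = h(1) = 0`. -/
noncomputable def binEnt (x : ℝ) : ℝ := -(x * Real.log x) - (1 - x) * Real.log (1 - x)

/-
Restricting `P` and `Q` to a measurable set `T` and applying Gibbs' inequality for finite measures
to the restrictions gives `P(T) (ln P(T) - ln Q(T)) ≤ ∫_T ln (dP/dQ) dP`. Adding the cases `T = S`
and `T = Sᶜ` bounds `D(P‖Q)` from below, and since `Q(Sᶜ) ≤ 1` the term `-P(Sᶜ) ln Q(Sᶜ) ≥ 0` can be
dropped, which leaves `-P(S) ln Q(S) - h(P(Sᶜ)) ≤ D(P‖Q) ≤ K`.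
-/

open Real InformationTheory

namespace MeasureTheory

variable {Ω : Type*} [MeasurableSpace Ω] {μ ν : Measure Ω} {s : Set Ω}

lemma Measure.rnDeriv_restrict_restrict [μ.HaveLebesgueDecomposition ν] [SigmaFinite ν]
    (hμν : μ ≪ ν) (hs : MeasurableSet s) :
    (μ.restrict s).rnDeriv (ν.restrict s) =ᵐ[ν.restrict s] μ.rnDeriv ν := by
  conv_lhs => rw [← Measure.withDensity_rnDeriv_eq μ ν hμν, restrict_withDensity hs]
  exact Measure.rnDeriv_withDensity _ (Measure.measurable_rnDeriv μ ν)

lemma llr_restrict [μ.HaveLebesgueDecomposition ν] [SigmaFinite ν] (hμν : μ ≪ ν)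
    (hs : MeasurableSet s) :
    llr (μ.restrict s) (ν.restrict s) =ᵐ[μ.restrict s] llr μ ν := by
  filter_upwards [(hμν.restrict s).ae_le (Measure.rnDeriv_restrict_restrict hμν hs)] with x hx
  simp only [llr_def, hx]

lemma mul_log_sub_log_le_setIntegral_llr [IsFiniteMeasure μ] [IsFiniteMeasure ν] (hμν : μ ≪ ν)
    (h_int : Integrable (llr μ ν) μ) (hs : MeasurableSet s) :
    μ.real s * (log (μ.real s) - log (ν.real s)) ≤ ∫ x in s, llr μ ν x ∂μ := by
  by_cases hμs : μ s = 0
  · simp [Measure.restrict_eq_zero.2 hμs, measureReal_def, hμs]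
  have hνs : ν.real s ≠ 0 := by
    simpa [measureReal_def, ENNReal.toReal_eq_zero_iff] using fun h ↦ hμs (hμν h)
  have hμs' : μ.real s ≠ 0 := by simpa [measureReal_def, ENNReal.toReal_eq_zero_iff] using hμs
  have h_llr := llr_restrict hμν hs
  have h_int' : Integrable (llr (μ.restrict s) (ν.restrict s)) (μ.restrict s) :=
    (integrable_congr h_llr).2 h_int.integrableOn
  have h := mul_log_le_toReal_klDiv (hμν.restrict s) h_int'
  rw [toReal_klDiv (hμν.restrict s) h_int', integral_congr_ae h_llr] at h
  simp only [measureReal_restrict_apply_univ, log_div hμs' hνs] at h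
  linarith

end MeasureTheory

open MeasureTheory

lemma klDivM_le_coe_iff {Ω : Type*} [MeasurableSpace Ω] {P Q : Measure Ω} {K : ℝ} :
    klDivM P Q ≤ (K : EReal) ↔ P ≪ Q ∧ Integrable (llr P Q) P ∧ ∫ x, llr P Q x ∂P ≤ K := by
  unfold klDivM
  split_ifs with h
  · simp [h]
  · simpa [h] using fun h_ac h_int ↦ (h ⟨h_ac, h_int⟩).elim

/-- If `D(P‖Q) ≤ K` then `K ≥ −P(S) ln Q(S) − h(P(Sᶜ))`. -/
theorem stmt7 {Ω : Type*} [MeasurableSpace Ω] (P Q : Measure Ω)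
    [IsProbabilityMeasure P] [IsProbabilityMeasure Q]
    (S : Set Ω) (hS : MeasurableSet S)
    (K : ℝ) (hK : klDivM P Q ≤ (K : EReal)) :
    -((P S).toReal * Real.log ((Q S).toReal) ) - binEnt ((P Sᶜ).toReal) ≤ K := by
  obtain ⟨hPQ, h_int, h_le⟩ := klDivM_le_coe_iff.1 hK
  have h_on_S := mul_log_sub_log_le_setIntegral_llr hPQ h_int hS
  have h_on_Sc := mul_log_sub_log_le_setIntegral_llr hPQ h_int hS.compl
  have h_split := integral_add_compl hS h_int
  have h_log_Sc : log (Q.real Sᶜ) ≤ 0 := log_nonpos measureReal_nonneg measureReal_le_one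
  have h_binEnt :
      binEnt (P.real Sᶜ) = -(P.real Sᶜ * log (P.real Sᶜ)) - P.real S * log (P.real S) := by
    rw [binEnt, probReal_compl_eq_one_sub hS, sub_sub_cancel]
  have h_Sc_term : P.real Sᶜ * log (Q.real Sᶜ) ≤ 0 :=
    mul_nonpos_of_nonneg_of_nonpos measureReal_nonneg h_log_Sc
  change -(P.real S * log (Q.real S)) - binEnt (P.real Sᶜ) ≤ K
  linarith
end

section
/- The error probability of a binary hypothesis test performed across a DMC with feedback using a variable-length code with stopping time T of finite expectation is lower bounded by P_e ≥ ( min{p_A, p_N} / 4 ) · exp( − C_1 · E[T] ), where p_A and p_N are the prior probabilities of the two hypotheses. -/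
/-!
Bretagnolle–Huber: for probability vectors `a, b` one has `∑ min (a i) (b i) ≥ ½ exp (-D(a‖b))`.
Apply it to the laws of the first `M` outputs under the two hypotheses, after both have been
modified to feed the channel one fixed input from the stopping time on. The modification does not
change the probability of any event decided by time `M`, and by the chain rule only the steps
before `T` contribute to the divergence, each at most `C₁`; hence `D ≤ C₁ E[T]` under either
hypothesis. The overlap `∑ min` is at most the sum of the two error probabilities plus `P_A(T > M)`,
and the latter is below `¼ exp(…)` for large `M`; weighting by `min p_A p_N` and using that
`p_A E_A[T] + p_N E_N[T]` dominates the smaller expectation gives the bound.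
-/

open MeasureTheory
open scoped BigOperators

noncomputable section

open Finset Filter Topology

variable {Y : Type*}

def prefixOf (n : ℕ) (ω : ℕ → Y) : Fin n → Y := fun i => ω i

def padWord [Nonempty Y] (n : ℕ) (v : Fin n → Y) : ℕ → Y :=
  fun i => if h : i < n then v ⟨i, h⟩ else Classical.arbitrary Y

lemma prefixOf_eq_prefixOf_iff {n : ℕ} {ω ω' : ℕ → Y} :
    prefixOf n ω = prefixOf n ω' ↔ ∀ i < n, ω i = ω' i := by
  simp [prefixOf, funext_iff, Fin.forall_iff]

lemma cylinder_eq_preimage_prefixOf (n : ℕ) (v : ℕ → Y) :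
    cylinder n v = prefixOf n ⁻¹' {prefixOf n v} := by
  ext ω
  simp [_root_.cylinder, prefixOf_eq_prefixOf_iff]

lemma measurable_prefixOf [MeasurableSpace Y] (n : ℕ) : Measurable (prefixOf (Y := Y) n) :=
  measurable_pi_lambda _ fun i => measurable_pi_apply (i : ℕ)

section Pad

variable [Nonempty Y]

lemma padWord_of_lt {n : ℕ} (v : Fin n → Y) {i : ℕ} (h : i < n) : padWord n v i = v ⟨i, h⟩ :=
  dif_pos h

@[simp]
lemma prefixOf_padWord (n : ℕ) (v : Fin n → Y) : prefixOf n (padWord n v) = v :=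
  funext fun i => padWord_of_lt v i.isLt

lemma prefixOf_padWord_succ (n : ℕ) (w : Fin (n + 1) → Y) :
    prefixOf n (padWord (n + 1) w) = Fin.init w :=
  funext fun i => padWord_of_lt w (Nat.lt_succ_of_lt i.isLt)

lemma padWord_succ_self (n : ℕ) (w : Fin (n + 1) → Y) :
    padWord (n + 1) w n = w (Fin.last n) :=
  padWord_of_lt w n.lt_succ_self

lemma padWord_succ_of_lt {n : ℕ} (w : Fin (n + 1) → Y) {i : ℕ} (h : i < n) :
    padWord (n + 1) w i = padWord n (Fin.init w) i := by
  rw [padWord_of_lt w (Nat.lt_succ_of_lt h), padWord_of_lt _ h]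
  rfl

lemma padWord_snoc_agree {n : ℕ} (u : Fin n → Y) (y : Y) :
    ∀ i < n, padWord n u i = padWord (n + 1) (Fin.snoc u y) i := fun i hi => by
  rw [padWord_succ_of_lt _ hi, Fin.init_snoc]

end Pad

lemma sum_pi_fin_succ {M : Type*} [AddCommMonoid M] [Fintype Y] (n : ℕ)
    (F : (Fin (n + 1) → Y) → M) :
    ∑ w, F w = ∑ u : Fin n → Y, ∑ y, F (Fin.snoc u y) := by
  rw [← (Fin.snocEquiv fun _ => Y).sum_comp, Fintype.sum_prod_type, Finset.sum_comm]
  rfl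

/-- `κ n v` is the law of the next output after the outputs `v`; with feedback it is
`p(· | f n v)`. -/
abbrev StepKernel (Y : Type*) := (n : ℕ) → (Fin n → Y) → Y → ℝ

def pathMass (κ : StepKernel Y) : (n : ℕ) → (Fin n → Y) → ℝ
  | 0, _ => 1
  | n + 1, w => pathMass κ n (Fin.init w) * κ n (Fin.init w) (w (Fin.last n))

section PathMass

variable {κ : StepKernel Y}

lemma pathMass_succ (n : ℕ) (w : Fin (n + 1) → Y) :
    pathMass κ (n + 1) w = pathMass κ n (Fin.init w) * κ n (Fin.init w) (w (Fin.last n)) :=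
  rfl

lemma pathMass_snoc (n : ℕ) (u : Fin n → Y) (y : Y) :
    pathMass κ (n + 1) (Fin.snoc u y) = pathMass κ n u * κ n u y := by
  simp [pathMass_succ]

lemma pathMass_nonneg (hκ : ∀ n v y, 0 ≤ κ n v y) : ∀ n v, 0 ≤ pathMass κ n v
  | 0, _ => zero_le_one
  | n + 1, _ => mul_nonneg (pathMass_nonneg hκ n _) (hκ n _ _)

lemma pathMass_pos (hκ : ∀ n v y, 0 < κ n v y) : ∀ n v, 0 < pathMass κ n v
  | 0, _ => one_pos
  | n + 1, _ => mul_pos (pathMass_pos hκ n _) (hκ n _ _)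

lemma sum_pathMass [Fintype Y] (hκ : ∀ n v, ∑ y, κ n v y = 1) (n : ℕ) :
    ∑ v, pathMass κ n v = 1 := by
  induction n with
  | zero => simp [pathMass]
  | succ n ih => simp [sum_pi_fin_succ, pathMass_snoc, ← mul_sum, hκ, ih]

end PathMass

def IsOutputLaw [MeasurableSpace Y] (κ : StepKernel Y) (μ : Measure (ℕ → Y)) : Prop :=
  ∀ n v, μ (cylinder (n + 1) v) = μ (cylinder n v) * ENNReal.ofReal (κ n (prefixOf n v) (v n))

def DeterminedBy (n : ℕ) (S : Set (ℕ → Y)) : Prop :=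
  ∀ ω ω', (∀ i < n, ω i = ω' i) → ω ∈ S → ω' ∈ S

def massOn [Nonempty Y] [Fintype Y] (κ : StepKernel Y) (n : ℕ) (S : Set (ℕ → Y)) : ℝ :=
  ∑ v, {v | padWord n v ∈ S}.indicator (pathMass κ n) v

section Measure

variable [Nonempty Y]

lemma DeterminedBy.preimage_prefixOf {n : ℕ} {S : Set (ℕ → Y)} (hS : DeterminedBy n S) :
    prefixOf n ⁻¹' {v | padWord n v ∈ S} = S := by
  ext ω
  have hagree : ∀ i < n, padWord n (prefixOf n ω) i = ω i := fun i hi =>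
    congrFun (prefixOf_padWord n (prefixOf n ω)) ⟨i, hi⟩
  exact ⟨hS _ _ hagree, hS _ _ fun i hi => (hagree i hi).symm⟩

variable [MeasurableSpace Y] {κ : StepKernel Y} {μ : Measure (ℕ → Y)}

lemma DeterminedBy.measurableSet [Finite Y] [MeasurableSingletonClass Y] {n : ℕ}
    {S : Set (ℕ → Y)} (hS : DeterminedBy n S) : MeasurableSet S :=
  hS.preimage_prefixOf ▸ measurable_prefixOf n (Set.toFinite _).measurableSet

lemma IsOutputLaw.measure_cylinder_padWord [IsProbabilityMeasure μ] (hμ : IsOutputLaw κ μ)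
    (hκ : ∀ n v y, 0 ≤ κ n v y) (n : ℕ) (v : Fin n → Y) :
    μ (cylinder n (padWord n v)) = ENNReal.ofReal (pathMass κ n v) := by
  induction n with
  | zero => simp [_root_.cylinder, pathMass]
  | succ n ih =>
    rw [hμ, cylinder_eq_preimage_prefixOf n, prefixOf_padWord_succ, padWord_succ_self,
      ← prefixOf_padWord n (Fin.init v), ← cylinder_eq_preimage_prefixOf, ih, prefixOf_padWord,
      pathMass_succ, ENNReal.ofReal_mul (pathMass_nonneg hκ n _)]

lemma IsOutputLaw.toReal_measure_eq_massOn [Fintype Y] [MeasurableSingletonClass Y]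
    [IsProbabilityMeasure μ] (hμ : IsOutputLaw κ μ) (hκ : ∀ n v y, 0 ≤ κ n v y) {n : ℕ}
    {S : Set (ℕ → Y)} (hS : DeterminedBy n S) : (μ S).toReal = massOn κ n S := by
  have hcyl v : μ.map (prefixOf n) {v} = ENNReal.ofReal (pathMass κ n v) := by
    rw [Measure.map_apply (measurable_prefixOf n) (measurableSet_singleton v),
      ← prefixOf_padWord n v, ← cylinder_eq_preimage_prefixOf, prefixOf_padWord,
      hμ.measure_cylinder_padWord hκ]
  classical
  have hmap : μ S = μ.map (prefixOf n) ↑(univ.filter fun v => padWord n v ∈ S) := by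
    rw [Measure.map_apply (measurable_prefixOf n) (Finset.measurableSet _), coe_filter_univ,
      hS.preimage_prefixOf]
  rw [hmap, ← sum_measure_singleton, ENNReal.toReal_sum (fun v _ => by simp [hcyl]), massOn,
    ← coe_filter_univ, sum_indicator_subset _ (subset_univ _)]
  simp [hcyl, ENNReal.toReal_ofReal (pathMass_nonneg hκ n _)]

end Measure

def IsStoppingRule (T : (ℕ → Y) → ℕ) : Prop :=
  ∀ n ω ω', (∀ i < n, ω i = ω' i) → (T ω = n ↔ T ω' = n)

def stoppedPath (T : (ℕ → Y) → ℕ) (ω : ℕ → Y) : Σ n, Fin n → Y :=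
  ⟨T ω, prefixOf (T ω) ω⟩

def IsStoppedEvent (T : (ℕ → Y) → ℕ) (E : Set (ℕ → Y)) : Prop :=
  ∀ n, DeterminedBy n (E ∩ {ω | T ω ≤ n})

/-- After the stopping time the kernel emits `q` whatever the hypothesis, so the continuation
carries no information. -/
def stopKernel [Nonempty Y] (T : (ℕ → Y) → ℕ) (q : Y → ℝ) (κ : StepKernel Y) : StepKernel Y :=
  fun n v => if n < T (padWord n v) then κ n v else q

namespace IsStoppingRule

variable {T : (ℕ → Y) → ℕ} (hT : IsStoppingRule T)
include hT

lemma eq_of_agree {n : ℕ} {ω ω' : ℕ → Y} (hle : T ω ≤ n) (h : ∀ i < n, ω i = ω' i) :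
    T ω' = T ω :=
  (hT _ ω ω' fun i hi => h i (hi.trans_le hle)).1 rfl

lemma lt_iff_of_agree {n : ℕ} {ω ω' : ℕ → Y} (h : ∀ i < n, ω i = ω' i) :
    n < T ω ↔ n < T ω' := by
  constructor <;> intro hlt <;> by_contra! hle
  · have := hT.eq_of_agree hle fun i hi => (h i hi).symm
    omega
  · have := hT.eq_of_agree hle h
    omega

lemma determinedBy_lt (n : ℕ) : DeterminedBy n {ω | n < T ω} :=
  fun _ _ h hω => (hT.lt_iff_of_agree h).1 hω

lemma stoppedPath_eq_of_agree {n : ℕ} {ω ω' : ℕ → Y} (hle : T ω ≤ n)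
    (h : ∀ i < n, ω i = ω' i) : stoppedPath T ω' = stoppedPath T ω := by
  unfold stoppedPath
  rw [hT.eq_of_agree hle h, prefixOf_eq_prefixOf_iff.2 fun i hi => (h i (hi.trans_le hle)).symm]

lemma isStoppedEvent_preimage_stoppedPath (s : Set (Σ n, Fin n → Y)) :
    IsStoppedEvent T (stoppedPath T ⁻¹' s) := fun _ ω ω' h ⟨hs, hle⟩ =>
  ⟨by rw [Set.mem_preimage, hT.stoppedPath_eq_of_agree hle h]; exact hs,
    (hT.eq_of_agree hle h).le.trans hle⟩

section Words

variable [Nonempty Y]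

lemma lt_padWord_snoc_iff {n : ℕ} (u : Fin n → Y) (y : Y) :
    n < T (padWord (n + 1) (Fin.snoc u y)) ↔ n < T (padWord n u) :=
  (hT.lt_iff_of_agree (padWord_snoc_agree u y)).symm

lemma padWord_snoc_of_le {n : ℕ} {u : Fin n → Y} (y : Y) (hle : T (padWord n u) ≤ n) :
    T (padWord (n + 1) (Fin.snoc u y)) = T (padWord n u) :=
  hT.eq_of_agree hle (padWord_snoc_agree u y)

lemma padWord_snoc_mem_iff {E : Set (ℕ → Y)} (hE : IsStoppedEvent T E) {M : ℕ} {u : Fin M → Y}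
    (y : Y) (hle : T (padWord M u) ≤ M) :
    padWord (M + 1) (Fin.snoc u y) ∈ E ∩ {ω | T ω ≤ M + 1} ↔ padWord M u ∈ E ∩ {ω | T ω ≤ M} := by
  constructor
  · rintro ⟨hmem, -⟩
    exact hE M _ _ (fun i hi => (padWord_snoc_agree u y i hi).symm)
      ⟨hmem, (hT.padWord_snoc_of_le y hle).le.trans hle⟩
  · intro hu
    obtain ⟨hmem, hle'⟩ := hE M _ _ (padWord_snoc_agree u y) hu
    exact ⟨hmem, hle'.trans M.le_succ⟩

lemma pathMass_congr {κ κ' : StepKernel Y} (hκ : ∀ n v, n < T (padWord n v) → κ n v = κ' n v) :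
    ∀ n v, n ≤ T (padWord n v) → pathMass κ n v = pathMass κ' n v := by
  intro n
  induction n with
  | zero => exact fun _ _ => rfl
  | succ n ih =>
    intro w hw
    have hlt : n < T (padWord n (Fin.init w)) := by
      rwa [← Fin.snoc_init_self w, Nat.succ_le_iff, hT.lt_padWord_snoc_iff] at hw
    rw [pathMass_succ, pathMass_succ, ih _ hlt.le, hκ _ _ hlt]

variable [Fintype Y]

lemma massOn_stoppedEvent_succ {E : Set (ℕ → Y)} (hE : IsStoppedEvent T E) {κ : StepKernel Y}
    (hκ : ∀ n v, ∑ y, κ n v y = 1) (M : ℕ) :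
    massOn κ (M + 1) (E ∩ {ω | T ω ≤ M + 1}) = massOn κ M (E ∩ {ω | T ω ≤ M}) +
      ∑ u : Fin M → Y, if M < T (padWord M u) then ∑ y,
        {w | padWord (M + 1) w ∈ E ∩ {ω | T ω ≤ M + 1}}.indicator (pathMass κ (M + 1))
          (Fin.snoc u y) else 0 := by
  rw [massOn, massOn, sum_pi_fin_succ, ← sum_add_distrib]
  refine sum_congr rfl fun u _ => ?_
  by_cases hlt : M < T (padWord M u)
  · have hu : u ∉ {v | padWord M v ∈ E ∩ {ω | T ω ≤ M}} := fun h => h.2.not_gt hlt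
    rw [if_pos hlt, Set.indicator_of_notMem hu, zero_add]
  · have hle : T (padWord M u) ≤ M := not_lt.1 hlt
    rw [if_neg hlt, add_zero]
    by_cases hu : u ∈ {v | padWord M v ∈ E ∩ {ω | T ω ≤ M}}
    · have hsnoc y : Fin.snoc u y ∈ {w | padWord (M + 1) w ∈ E ∩ {ω | T ω ≤ M + 1}} :=
        (hT.padWord_snoc_mem_iff hE y hle).2 hu
      simp only [Set.indicator_of_mem (hsnoc _), Set.indicator_of_mem hu, pathMass_snoc,
        ← mul_sum, hκ, mul_one]
    · have hsnoc y : Fin.snoc u y ∉ {w | padWord (M + 1) w ∈ E ∩ {ω | T ω ≤ M + 1}} :=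
        mt (hT.padWord_snoc_mem_iff hE y hle).1 hu
      simp only [Set.indicator_of_notMem (hsnoc _), Set.indicator_of_notMem hu, sum_const_zero]

lemma massOn_stoppedEvent_congr {E : Set (ℕ → Y)} (hE : IsStoppedEvent T E)
    {κ κ' : StepKernel Y} (hκ : ∀ n v, ∑ y, κ n v y = 1) (hκ' : ∀ n v, ∑ y, κ' n v y = 1)
    (hagree : ∀ n v, n < T (padWord n v) → κ n v = κ' n v) (M : ℕ) :
    massOn κ M (E ∩ {ω | T ω ≤ M}) = massOn κ' M (E ∩ {ω | T ω ≤ M}) := by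
  classical
  induction M with
  | zero => rfl
  | succ M ih =>
    rw [hT.massOn_stoppedEvent_succ hE hκ, hT.massOn_stoppedEvent_succ hE hκ', ih]
    congr 1
    refine sum_congr rfl fun u _ => ?_
    split_ifs with hlt
    · refine sum_congr rfl fun y _ => ?_
      simp only [Set.indicator_apply,
        hT.pathMass_congr hagree _ _ ((hT.lt_padWord_snoc_iff u y).2 hlt)]
    · rfl

lemma massOn_lt_congr {κ κ' : StepKernel Y}
    (hagree : ∀ n v, n < T (padWord n v) → κ n v = κ' n v) (M : ℕ) :
    massOn κ M {ω | M < T ω} = massOn κ' M {ω | M < T ω} :=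
  sum_congr rfl fun v _ => by
    classical
    simp only [Set.indicator_apply]
    split_ifs with hlt
    exacts [hT.pathMass_congr hagree M v hlt.le, rfl]

end Words

end IsStoppingRule

section StopKernel

variable [Nonempty Y] {T : (ℕ → Y) → ℕ} {q : Y → ℝ} {κ : StepKernel Y}

lemma stopKernel_of_lt {n : ℕ} {v : Fin n → Y} (h : n < T (padWord n v)) :
    stopKernel T q κ n v = κ n v :=
  if_pos h

lemma stopKernel_of_le {n : ℕ} {v : Fin n → Y} (h : T (padWord n v) ≤ n) :
    stopKernel T q κ n v = q :=
  if_neg h.not_gt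

lemma stopKernel_mem {s : Set (Y → ℝ)} (hq : q ∈ s) (hκ : ∀ n v, κ n v ∈ s) (n : ℕ)
    (v : Fin n → Y) : stopKernel T q κ n v ∈ s := by
  unfold stopKernel
  split_ifs
  exacts [hκ n v, hq]

variable [Fintype Y] [MeasurableSpace Y] [MeasurableSingletonClass Y] {μ : Measure (ℕ → Y)}
  [IsProbabilityMeasure μ]

lemma IsStoppingRule.massOn_stopKernel_stoppedEvent (hT : IsStoppingRule T) {E : Set (ℕ → Y)}
    (hE : IsStoppedEvent T E) (hμ : IsOutputLaw κ μ) (hq : ∑ y, q y = 1)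
    (hκ₀ : ∀ n v y, 0 ≤ κ n v y) (hκ : ∀ n v, ∑ y, κ n v y = 1) (M : ℕ) :
    massOn (stopKernel T q κ) M (E ∩ {ω | T ω ≤ M}) = (μ (E ∩ {ω | T ω ≤ M})).toReal := by
  rw [hT.massOn_stoppedEvent_congr hE (stopKernel_mem (s := {r | ∑ y, r y = 1}) hq hκ) hκ
    (fun _ _ => stopKernel_of_lt), hμ.toReal_measure_eq_massOn hκ₀ (hE M)]

lemma IsStoppingRule.massOn_stopKernel_lt (hT : IsStoppingRule T) (hμ : IsOutputLaw κ μ)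
    (hκ₀ : ∀ n v y, 0 ≤ κ n v y) (M : ℕ) :
    massOn (stopKernel T q κ) M {ω | M < T ω} = (μ {ω | M < T ω}).toReal := by
  rw [hT.massOn_lt_congr (fun _ _ => stopKernel_of_lt),
    hμ.toReal_measure_eq_massOn hκ₀ (hT.determinedBy_lt M)]

end StopKernel

section RelEntropy

variable {ι : Type*} [Fintype ι]

def relEntropy (a b : ι → ℝ) : ℝ :=
  ∑ i, a i * Real.log (a i / b i)

@[simp]
lemma relEntropy_self (a : ι → ℝ) : relEntropy a a = 0 :=
  sum_eq_zero fun i _ => by rcases eq_or_ne (a i) 0 with h | h <;> simp [h]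

lemma exp_neg_half_relEntropy_le_sum_sqrt {a b : ι → ℝ} (ha : ∀ i, 0 < a i) (hb : ∀ i, 0 < b i)
    (hsum : ∑ i, a i = 1) :
    Real.exp (-relEntropy a b / 2) ≤ ∑ i, Real.sqrt (a i * b i) := by
  have hpow i : Real.sqrt (b i / a i) ^ a i = Real.exp (-(a i * Real.log (a i / b i)) / 2) := by
    rw [Real.sqrt_eq_rpow, ← Real.rpow_mul (div_pos (hb i) (ha i)).le,
      Real.rpow_def_of_pos (div_pos (hb i) (ha i)), ← inv_div, Real.log_inv]
    ring_nf
  have hmul i : a i * Real.sqrt (b i / a i) = Real.sqrt (a i * b i) := by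
    rw [← Real.sqrt_sq (ha i).le, ← Real.sqrt_mul (sq_nonneg _), Real.sqrt_sq (ha i).le]
    field_simp
  calc Real.exp (-relEntropy a b / 2)
      = ∏ i, Real.sqrt (b i / a i) ^ a i := by
        simp only [hpow, ← Real.exp_sum, relEntropy, ← sum_div, sum_neg_distrib]
    _ ≤ ∑ i, a i * Real.sqrt (b i / a i) :=
        Real.geom_mean_le_arith_mean_weighted _ _ _ (fun i _ => (ha i).le) hsum
          (fun i _ => Real.sqrt_nonneg _)
    _ = ∑ i, Real.sqrt (a i * b i) := by simp only [hmul]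

lemma sq_sum_sqrt_le_two_mul_sum_min {a b : ι → ℝ} (ha : ∀ i, 0 ≤ a i) (hb : ∀ i, 0 ≤ b i)
    (hsa : ∑ i, a i = 1) (hsb : ∑ i, b i = 1) :
    (∑ i, Real.sqrt (a i * b i)) ^ 2 ≤ 2 * ∑ i, min (a i) (b i) := by
  have hmin : 0 ≤ ∑ i, min (a i) (b i) := sum_nonneg fun i _ => le_min (ha i) (hb i)
  have hmax : ∑ i, max (a i) (b i) ≤ 2 := by
    calc ∑ i, max (a i) (b i) ≤ ∑ i, (a i + b i) :=
          sum_le_sum fun i _ => max_le_add_of_nonneg (ha i) (hb i)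
      _ = 2 := by rw [sum_add_distrib, hsa, hsb]; norm_num
  have hcs : ∑ i, Real.sqrt (a i * b i)
      ≤ Real.sqrt (∑ i, min (a i) (b i)) * Real.sqrt (∑ i, max (a i) (b i)) := by
    simp only [← min_mul_max (a _) (b _), Real.sqrt_mul (le_min (ha _) (hb _))]
    exact Real.sum_sqrt_mul_sqrt_le _ (fun i => le_min (ha i) (hb i))
      (fun i => (ha i).trans (le_max_left _ _))
  calc (∑ i, Real.sqrt (a i * b i)) ^ 2
      ≤ (Real.sqrt (∑ i, min (a i) (b i)) * Real.sqrt (∑ i, max (a i) (b i))) ^ 2 :=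
        pow_le_pow_left₀ (sum_nonneg fun i _ => Real.sqrt_nonneg _) hcs 2
    _ = (∑ i, min (a i) (b i)) * ∑ i, max (a i) (b i) := by
        rw [mul_pow, Real.sq_sqrt hmin,
          Real.sq_sqrt (hmin.trans (sum_le_sum fun i _ => min_le_max))]
    _ ≤ 2 * ∑ i, min (a i) (b i) := by nlinarith

theorem exp_neg_relEntropy_le_two_mul_sum_min {a b : ι → ℝ} (ha : ∀ i, 0 < a i)
    (hb : ∀ i, 0 < b i) (hsa : ∑ i, a i = 1) (hsb : ∑ i, b i = 1) :
    Real.exp (-relEntropy a b) ≤ 2 * ∑ i, min (a i) (b i) :=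
  calc Real.exp (-relEntropy a b) = Real.exp (-relEntropy a b / 2) ^ 2 := by
        rw [← Real.exp_nat_mul]; ring_nf
    _ ≤ (∑ i, Real.sqrt (a i * b i)) ^ 2 :=
        pow_le_pow_left₀ (Real.exp_pos _).le (exp_neg_half_relEntropy_le_sum_sqrt ha hb hsa) 2
    _ ≤ 2 * ∑ i, min (a i) (b i) :=
        sq_sum_sqrt_le_two_mul_sum_min (fun i => (ha i).le) (fun i => (hb i).le) hsa hsb

lemma relEntropy_le_iSup_iSup {X : Type*} [Finite X] (p : X → ι → ℝ) (x x' : X) :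
    relEntropy (p x) (p x') ≤ ⨆ x, ⨆ x', relEntropy (p x) (p x') :=
  (le_ciSup (f := fun x' => relEntropy (p x) (p x')) (Set.finite_range _).bddAbove x').trans
    (le_ciSup (f := fun x => ⨆ x', relEntropy (p x) (p x')) (Set.finite_range _).bddAbove x)

end RelEntropy

lemma relEntropy_pathMass [Fintype Y] {κ₁ κ₂ : StepKernel Y} (h₁ : ∀ n v y, 0 < κ₁ n v y)
    (h₂ : ∀ n v y, 0 < κ₂ n v y) (hsum : ∀ n v, ∑ y, κ₁ n v y = 1) (M : ℕ) :
    relEntropy (pathMass κ₁ M) (pathMass κ₂ M) =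
      ∑ m ∈ range M, ∑ u, pathMass κ₁ m u * relEntropy (κ₁ m u) (κ₂ m u) := by
  induction M with
  | zero => simp [relEntropy, pathMass]
  | succ M ih =>
    have hstep u y : pathMass κ₁ (M + 1) (Fin.snoc u y) *
          Real.log (pathMass κ₁ (M + 1) (Fin.snoc u y) / pathMass κ₂ (M + 1) (Fin.snoc u y)) =
        pathMass κ₁ M u * Real.log (pathMass κ₁ M u / pathMass κ₂ M u) * κ₁ M u y +
          pathMass κ₁ M u * (κ₁ M u y * Real.log (κ₁ M u y / κ₂ M u y)) := by
      rw [pathMass_snoc, pathMass_snoc, mul_div_mul_comm,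
        Real.log_mul (div_pos (pathMass_pos h₁ M u) (pathMass_pos h₂ M u)).ne'
          (div_pos (h₁ M u y) (h₂ M u y)).ne']
      ring
    rw [sum_range_succ, ← ih, relEntropy, sum_pi_fin_succ]
    simp only [hstep, sum_add_distrib, ← mul_sum, hsum, mul_one, relEntropy]

section Tail

variable {Ω : Type*} [MeasurableSpace Ω] {μ : Measure Ω} [IsFiniteMeasure μ] {T : Ω → ℕ}

lemma sum_range_toReal_measure_lt_le_integral (hmeas : ∀ m, MeasurableSet {ω | m < T ω})
    (hT : Integrable (fun ω => (T ω : ℝ)) μ) (M : ℕ) :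
    ∑ m ∈ range M, (μ {ω | m < T ω}).toReal ≤ ∫ ω, (T ω : ℝ) ∂μ := by
  have hind m : Integrable ({ω | m < T ω}.indicator (1 : Ω → ℝ)) μ :=
    (integrable_const 1).indicator (hmeas m)
  have hpt ω : ∑ m ∈ range M, {ω | m < T ω}.indicator (1 : Ω → ℝ) ω ≤ T ω := by
    classical
    simp only [Set.indicator_apply, Set.mem_ofPred_eq, Pi.one_apply, sum_boole]
    exact_mod_cast (card_le_card fun m hm => by simpa using (mem_filter.1 hm).2).trans
      (card_range _).le
  calc ∑ m ∈ range M, (μ {ω | m < T ω}).toReal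
      = ∫ ω, ∑ m ∈ range M, {ω | m < T ω}.indicator (1 : Ω → ℝ) ω ∂μ := by
        rw [integral_finsetSum _ fun m _ => hind m]
        simp only [integral_indicator_one (hmeas _), measureReal_def]
    _ ≤ ∫ ω, (T ω : ℝ) ∂μ := integral_mono (integrable_finsetSum _ fun m _ => hind m) hT hpt

lemma tendsto_toReal_measure_lt_atTop (hmeas : ∀ m, MeasurableSet {ω | m < T ω}) :
    Tendsto (fun M => (μ {ω | M < T ω}).toReal) atTop (𝓝 0) := by
  have h := tendsto_measure_iInter_atTop (fun m => (hmeas m).nullMeasurableSet)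
    (fun _ _ hmm' _ hω => lt_of_le_of_lt hmm' hω) ⟨0, measure_ne_top μ _⟩
  rw [Set.iInter_eq_empty_iff.2 fun ω => ⟨T ω, (lt_irrefl (T ω))⟩, measure_empty] at h
  exact (ENNReal.tendsto_toReal ENNReal.zero_ne_top).comp h

end Tail

section StoppedTest

variable [Nonempty Y] [Fintype Y] [MeasurableSpace Y] [MeasurableSingletonClass Y]
  {T : (ℕ → Y) → ℕ} {q : Y → ℝ} {κ₁ κ₂ : StepKernel Y}

lemma IsStoppingRule.relEntropy_pathMass_stopKernel_le (hT : IsStoppingRule T)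
    {μ : Measure (ℕ → Y)} [IsProbabilityMeasure μ] (hμ : IsOutputLaw κ₁ μ)
    (hTμ : Integrable (fun ω => (T ω : ℝ)) μ) (hq : ∀ y, 0 < q y) (h₁ : ∀ n v y, 0 < κ₁ n v y)
    (h₂ : ∀ n v y, 0 < κ₂ n v y) (hq1 : ∑ y, q y = 1) (hsum : ∀ n v, ∑ y, κ₁ n v y = 1)
    {C : ℝ} (hC₀ : 0 ≤ C) (hC : ∀ n v, relEntropy (κ₁ n v) (κ₂ n v) ≤ C) (M : ℕ) :
    relEntropy (pathMass (stopKernel T q κ₁) M) (pathMass (stopKernel T q κ₂) M) ≤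
      C * ∫ ω, (T ω : ℝ) ∂μ := by
  have hpos {κ : StepKernel Y} (hκ : ∀ n v y, 0 < κ n v y) n v y : 0 < stopKernel T q κ n v y :=
    stopKernel_mem (T := T) (s := {r | ∀ y, 0 < r y}) hq (fun n v => hκ n v) n v y
  have hlayer m : ∑ u, pathMass (stopKernel T q κ₁) m u *
      relEntropy (stopKernel T q κ₁ m u) (stopKernel T q κ₂ m u) ≤
        C * massOn κ₁ m {ω | m < T ω} := by
    rw [massOn, mul_sum]
    refine sum_le_sum fun u _ => ?_
    by_cases hlt : m < T (padWord m u)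
    · rw [stopKernel_of_lt hlt, stopKernel_of_lt hlt,
        hT.pathMass_congr (fun _ _ => stopKernel_of_lt) m u hlt.le,
        Set.indicator_of_mem (show u ∈ {v | padWord m v ∈ {ω | m < T ω}} from hlt), mul_comm C]
      exact mul_le_mul_of_nonneg_left (hC m u) (pathMass_pos h₁ m u).le
    · rw [stopKernel_of_le (not_lt.1 hlt), stopKernel_of_le (not_lt.1 hlt), relEntropy_self,
        Set.indicator_of_notMem (show u ∉ {v | padWord m v ∈ {ω | m < T ω}} from hlt)]
      simp
  calc relEntropy (pathMass (stopKernel T q κ₁) M) (pathMass (stopKernel T q κ₂) M)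
      ≤ ∑ m ∈ range M, C * massOn κ₁ m {ω | m < T ω} := by
        rw [relEntropy_pathMass (hpos h₁) (hpos h₂)
          (stopKernel_mem (T := T) (s := {r | ∑ y, r y = 1}) hq1 hsum)]
        exact sum_le_sum fun m _ => hlayer m
    _ = C * ∑ m ∈ range M, (μ {ω | m < T ω}).toReal := by
        simp only [← mul_sum,
          hμ.toReal_measure_eq_massOn (fun n v y => (h₁ n v y).le) (hT.determinedBy_lt _)]
    _ ≤ C * ∫ ω, (T ω : ℝ) ∂μ := mul_le_mul_of_nonneg_left
        (sum_range_toReal_measure_lt_le_integral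
          (fun m => (hT.determinedBy_lt m).measurableSet) hTμ M) hC₀

lemma IsStoppingRule.sum_min_pathMass_stopKernel_le (hT : IsStoppingRule T)
    {μ₁ μ₂ : Measure (ℕ → Y)} [IsProbabilityMeasure μ₁] [IsProbabilityMeasure μ₂]
    (hμ₁ : IsOutputLaw κ₁ μ₁) (hμ₂ : IsOutputLaw κ₂ μ₂) (hq : ∀ y, 0 ≤ q y)
    (h₁ : ∀ n v y, 0 ≤ κ₁ n v y) (h₂ : ∀ n v y, 0 ≤ κ₂ n v y) (hq1 : ∑ y, q y = 1)
    (hs₁ : ∀ n v, ∑ y, κ₁ n v y = 1) (hs₂ : ∀ n v, ∑ y, κ₂ n v y = 1)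
    {E₁ E₂ : Set (ℕ → Y)} (hE₁ : IsStoppedEvent T E₁) (hE₂ : IsStoppedEvent T E₂)
    (hcover : ∀ ω, ω ∈ E₁ ∨ ω ∈ E₂) (M : ℕ) :
    ∑ w, min (pathMass (stopKernel T q κ₁) M w) (pathMass (stopKernel T q κ₂) M w) ≤
      (μ₁ E₁).toReal + (μ₂ E₂).toReal + (μ₁ {ω | M < T ω}).toReal := by
  set a := pathMass (stopKernel T q κ₁) M
  set b := pathMass (stopKernel T q κ₂) M
  have ha := pathMass_nonneg (stopKernel_mem (T := T) (s := {r | ∀ y, 0 ≤ r y}) hq h₁) M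
  have hb := pathMass_nonneg (stopKernel_mem (T := T) (s := {r | ∀ y, 0 ≤ r y}) hq h₂) M
  calc ∑ w, min (a w) (b w)
      ≤ massOn (stopKernel T q κ₁) M (E₁ ∩ {ω | T ω ≤ M}) +
          massOn (stopKernel T q κ₂) M (E₂ ∩ {ω | T ω ≤ M}) +
            massOn (stopKernel T q κ₁) M {ω | M < T ω} := by
        simp only [massOn, ← sum_add_distrib]
        refine sum_le_sum fun w _ => ?_
        have i₁ := Set.indicator_nonneg (fun v _ => ha v)
          (s := {v | padWord M v ∈ E₁ ∩ {ω | T ω ≤ M}}) w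
        have i₂ := Set.indicator_nonneg (fun v _ => hb v)
          (s := {v | padWord M v ∈ E₂ ∩ {ω | T ω ≤ M}}) w
        have i₃ := Set.indicator_nonneg (fun v _ => ha v) (s := {v | padWord M v ∈ {ω | M < T ω}}) w
        rcases le_or_gt (T (padWord M w)) M with hle | hlt
        · rcases hcover (padWord M w) with h | h
          · rw [Set.indicator_of_mem
              (show w ∈ {v | padWord M v ∈ E₁ ∩ {ω | T ω ≤ M}} from ⟨h, hle⟩)]
            linarith [min_le_left (a w) (b w)]
          · rw [Set.indicator_of_mem
              (show w ∈ {v | padWord M v ∈ E₂ ∩ {ω | T ω ≤ M}} from ⟨h, hle⟩)]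
            linarith [min_le_right (a w) (b w)]
        · rw [Set.indicator_of_mem (show w ∈ {v | padWord M v ∈ {ω | M < T ω}} from hlt)]
          linarith [min_le_left (a w) (b w)]
    _ = (μ₁ (E₁ ∩ {ω | T ω ≤ M})).toReal + (μ₂ (E₂ ∩ {ω | T ω ≤ M})).toReal +
          (μ₁ {ω | M < T ω}).toReal := by
        rw [hT.massOn_stopKernel_stoppedEvent hE₁ hμ₁ hq1 h₁ hs₁,
          hT.massOn_stopKernel_stoppedEvent hE₂ hμ₂ hq1 h₂ hs₂, hT.massOn_stopKernel_lt hμ₁ h₁]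
    _ ≤ (μ₁ E₁).toReal + (μ₂ E₂).toReal + (μ₁ {ω | M < T ω}).toReal := by
        gcongr <;> first | finiteness | exact Set.inter_subset_left

lemma IsStoppingRule.exp_neg_le_two_mul_sum_min_stopKernel (hT : IsStoppingRule T)
    {μ₁ μ₂ : Measure (ℕ → Y)} [IsProbabilityMeasure μ₁] [IsProbabilityMeasure μ₂]
    (hμ₁ : IsOutputLaw κ₁ μ₁) (hμ₂ : IsOutputLaw κ₂ μ₂)
    (hTμ₁ : Integrable (fun ω => (T ω : ℝ)) μ₁) (hTμ₂ : Integrable (fun ω => (T ω : ℝ)) μ₂)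
    (hq : ∀ y, 0 < q y) (h₁ : ∀ n v y, 0 < κ₁ n v y) (h₂ : ∀ n v y, 0 < κ₂ n v y)
    (hq1 : ∑ y, q y = 1) (hs₁ : ∀ n v, ∑ y, κ₁ n v y = 1) (hs₂ : ∀ n v, ∑ y, κ₂ n v y = 1)
    {C : ℝ} (hC₀ : 0 ≤ C) (hC₁₂ : ∀ n v, relEntropy (κ₁ n v) (κ₂ n v) ≤ C)
    (hC₂₁ : ∀ n v, relEntropy (κ₂ n v) (κ₁ n v) ≤ C) {w₁ w₂ : ℝ} (hw₁ : 0 ≤ w₁) (hw₂ : 0 ≤ w₂)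
    (hw : w₁ + w₂ = 1) (M : ℕ) :
    Real.exp (-(C * (w₁ * ∫ ω, (T ω : ℝ) ∂μ₁ + w₂ * ∫ ω, (T ω : ℝ) ∂μ₂))) ≤
      2 * ∑ w, min (pathMass (stopKernel T q κ₁) M w) (pathMass (stopKernel T q κ₂) M w) := by
  have hpos {κ : StepKernel Y} (hκ : ∀ n v y, 0 < κ n v y) :=
    pathMass_pos (stopKernel_mem (T := T) (s := {r | ∀ y, 0 < r y}) hq hκ) M
  have hsum {κ : StepKernel Y} (hκ : ∀ n v, ∑ y, κ n v y = 1) :=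
    sum_pathMass (stopKernel_mem (T := T) (s := {r | ∑ y, r y = 1}) hq1 hκ) M
  have h₁₂ := hT.relEntropy_pathMass_stopKernel_le hμ₁ hTμ₁ hq h₁ h₂ hq1 hs₁ hC₀ hC₁₂ M
  have h₂₁ := hT.relEntropy_pathMass_stopKernel_le hμ₂ hTμ₂ hq h₂ h₁ hq1 hs₂ hC₀ hC₂₁ M
  have hBH₁₂ := exp_neg_relEntropy_le_two_mul_sum_min (hpos h₁) (hpos h₂) (hsum hs₁) (hsum hs₂)
  have hBH₂₁ := exp_neg_relEntropy_le_two_mul_sum_min (hpos h₂) (hpos h₁) (hsum hs₂) (hsum hs₁)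
  simp only [min_comm (pathMass (stopKernel T q κ₂) M _)] at hBH₂₁
  set I₁ := ∫ ω, (T ω : ℝ) ∂μ₁
  set I₂ := ∫ ω, (T ω : ℝ) ∂μ₂
  rcases le_total I₁ I₂ with h | h
  · have : C * I₁ ≤ C * (w₁ * I₁ + w₂ * I₂) := by
      linear_combination -(C * I₁) * hw + mul_nonneg hC₀ (mul_nonneg hw₂ (sub_nonneg.2 h))
    exact (Real.exp_le_exp.2 (by linarith)).trans hBH₁₂
  · have : C * I₂ ≤ C * (w₁ * I₁ + w₂ * I₂) := by
      linear_combination -(C * I₂) * hw + mul_nonneg hC₀ (mul_nonneg hw₁ (sub_nonneg.2 h))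
    exact (Real.exp_le_exp.2 (by linarith)).trans hBH₂₁

end StoppedTest

end

/-- The error probability of a binary hypothesis test performed across a DMC with feedback,
with priors `p_A, p_N` and decision (by `d`, reading the stopped output `Y^T`) at a stopping
time `T` of finite expectation, is lower bounded by
`P_e ≥ (min{p_A,p_N}/4) exp(−C₁ E[T])` where `C₁ = max_{x,x'} D(p(·|x) ‖ p(·|x'))`. -/
theorem stmt8 {X Y : Type*} [Fintype X] [Fintype Y] [Nonempty X] [Nonempty Y]
    [MeasurableSpace Y] [MeasurableSingletonClass Y]
    (p : X → Y → ℝ) (hpos : ∀ x y, 0 < p x y) (hsum : ∀ x, ∑ y, p x y = 1)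
    (f : Bool → (n : ℕ) → (Fin n → Y) → X)
    (μA μN : Measure (ℕ → Y)) [IsProbabilityMeasure μA] [IsProbabilityMeasure μN]
    (hA : ∀ (n : ℕ) (v : ℕ → Y),
      μA (cylinder (n + 1) v) =
        μA (cylinder n v) * ENNReal.ofReal (p (f true n fun i => v i) (v n)))
    (hN : ∀ (n : ℕ) (v : ℕ → Y),
      μN (cylinder (n + 1) v) =
        μN (cylinder n v) * ENNReal.ofReal (p (f false n fun i => v i) (v n)))
    (T : (ℕ → Y) → ℕ)
    (hstop : ∀ (n : ℕ) (ω ω' : ℕ → Y), (∀ i < n, ω i = ω' i) → (T ω = n ↔ T ω' = n))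
    (hTA : Integrable (fun ω => (T ω : ℝ)) μA)
    (hTN : Integrable (fun ω => (T ω : ℝ)) μN)
    (pA pN : ℝ) (hpA : 0 < pA) (hpN : 0 < pN) (hprior : pA + pN = 1)
    (d : (Σ n, Fin n → Y) → Bool) :
    min pA pN / 4 *
        Real.exp (-((⨆ x, ⨆ x', ∑ y, p x y * Real.log (p x y / p x' y)) *
          (pA * ∫ ω, (T ω : ℝ) ∂μA + pN * ∫ ω, (T ω : ℝ) ∂μN)))
      ≤ pA * (μA {ω | d ⟨T ω, fun i => ω i⟩ = false}).toReal +
          pN * (μN {ω | d ⟨T ω, fun i => ω i⟩ = true}).toReal := by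
  have hT : IsStoppingRule T := hstop
  set κ : Bool → StepKernel Y := fun b n u => p (f b n u)
  have hμA : IsOutputLaw (κ true) μA := hA
  have hμN : IsOutputLaw (κ false) μN := hN
  set C₁ := ⨆ x, ⨆ x', ∑ y, p x y * Real.log (p x y / p x' y)
  have hC x x' : relEntropy (p x) (p x') ≤ C₁ := relEntropy_le_iSup_iSup p x x'
  have hC₀ : 0 ≤ C₁ := by simpa using hC (Classical.arbitrary X) (Classical.arbitrary X)
  set e := Real.exp (-(C₁ * (pA * ∫ ω, (T ω : ℝ) ∂μA + pN * ∫ ω, (T ω : ℝ) ∂μN)))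
  obtain ⟨M, hM⟩ := ((tendsto_toReal_measure_lt_atTop (μ := μA)
    fun m => (hT.determinedBy_lt m).measurableSet).eventually
      (ge_mem_nhds (by positivity : 0 < e / 4))).exists
  set q := p (Classical.arbitrary X)
  have hBH := hT.exp_neg_le_two_mul_sum_min_stopKernel (q := q) hμA hμN hTA hTN (hpos _)
    (fun _ _ => hpos _) (fun _ _ => hpos _) (hsum _) (fun _ _ => hsum _) (fun _ _ => hsum _) hC₀
    (fun _ _ => hC _ _) (fun _ _ => hC _ _) hpA.le hpN.le hprior M
  set PA := (μA {ω | d ⟨T ω, fun i => ω i⟩ = false}).toReal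
  set PN := (μN {ω | d ⟨T ω, fun i => ω i⟩ = true}).toReal
  have htest : _ ≤ PA + PN + _ :=
    hT.sum_min_pathMass_stopKernel_le (q := q) hμA hμN (fun _ => (hpos _ _).le)
      (fun _ _ _ => (hpos _ _).le) (fun _ _ _ => (hpos _ _).le) (hsum _) (fun _ _ => hsum _)
      (fun _ _ => hsum _) (hT.isStoppedEvent_preimage_stoppedPath {z | d z = false})
      (hT.isStoppedEvent_preimage_stoppedPath {z | d z = true})
      (fun ω => (Bool.eq_false_or_eq_true _).symm) M
  have hPe : e / 4 ≤ PA + PN := by linarith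
  linarith [mul_le_mul_of_nonneg_left hPe (le_min hpA.le hpN.le),
    mul_le_mul_of_nonneg_right (min_le_left pA pN) (ENNReal.toReal_nonneg : 0 ≤ PA),
    mul_le_mul_of_nonneg_right (min_le_right pA pN) (ENNReal.toReal_nonneg : 0 ≤ PN)]
end

section
/- With τ defined as the first time the MAP error drops below δ (or T is reached), the expected posterior entropy at τ satisfies E[H(Y^τ)] ≤ h(δ) + ( δ + P_e/δ ) ln M. -/
/-!
Stop at `τ`. If `P_e(Y^τ) ≤ δ`, Fano's inequality bounds the posterior entropy by
`h(δ) + δ ln M`. Otherwise `τ = T` and `P_e(Y^T) > δ`, so the trivial bound `ln M` is at most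
`(P_e(Y^T) / δ) ln M`. Hence `H(Y^τ) ≤ h(δ) + δ ln M + (P_e(Y^T) / δ) ln M` pointwise, and
integrating gives the claim. Since `H(Y^τ) ≥ 0`, the integral comparison needs integrability
only of the right-hand side, so `τ` never has to be shown measurable.
-/

open MeasureTheory
open scoped BigOperators ENNReal

/-- The event that the first `n` channel outputs agree with those of the realization `ω`. -/
def histSet {Ω Y : Type*} (Yv : Ω → ℕ → Y) (n : ℕ) (ω : Ω) : Set Ω :=
  {ω' | ∀ i < n, Yv ω' i = Yv ω i}

/-- The posterior probability `p(w | Y^n)` of message `w` given the first `n` outputs of the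
realization `ω`. -/
noncomputable def post {Ω W Y : Type*} [MeasurableSpace Ω] (μ : Measure Ω)
    (Wv : Ω → W) (Yv : Ω → ℕ → Y) (n : ℕ) (ω : Ω) (w : W) : ℝ :=
  (μ ({ω' | Wv ω' = w} ∩ histSet Yv n ω)).toReal / (μ (histSet Yv n ω)).toReal

/-- The MAP error probability `P_e(Y^n) = 1 − max_w p(w | Y^n)`. -/
noncomputable def peMap {Ω W Y : Type*} [MeasurableSpace Ω] [Fintype W] (μ : Measure Ω)
    (Wv : Ω → W) (Yv : Ω → ℕ → Y) (n : ℕ) (ω : Ω) : ℝ :=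
  1 - ⨆ w, post μ Wv Yv n ω w

/-- `τ = inf{n : P_e(Y^n) ≤ δ or n = T}`. -/
noncomputable def tauOf {Ω W Y : Type*} [MeasurableSpace Ω] [Fintype W] (μ : Measure Ω)
    (Wv : Ω → W) (Yv : Ω → ℕ → Y) (δ : ℝ) (T : Ω → ℕ) (ω : Ω) : ℕ :=
  sInf {n | peMap μ Wv Yv n ω ≤ δ ∨ n = T ω}

/-- The entropy `H(Y^n)` of the posterior distribution of the message given `Y^n`. -/
noncomputable def postEnt {Ω W Y : Type*} [MeasurableSpace Ω] [Fintype W] (μ : Measure Ω)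
    (Wv : Ω → W) (Yv : Ω → ℕ → Y) (n : ℕ) (ω : Ω) : ℝ :=
  ∑ w, -(post μ Wv Yv n ω w * Real.log (post μ Wv Yv n ω w))

open Real

lemma Real.sum_negMulLog_le {ι : Type*} (s : Finset ι) {p : ι → ℝ} (hp : ∀ i ∈ s, 0 ≤ p i) :
    ∑ i ∈ s, negMulLog (p i) ≤ negMulLog (∑ i ∈ s, p i) + (∑ i ∈ s, p i) * log s.card := by
  rcases s.eq_empty_or_nonempty with rfl | hs
  · simp
  have hn : (0 : ℝ) < s.card := by exact_mod_cast hs.card_pos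
  have hJ := concaveOn_negMulLog.le_map_sum (t := s) (w := fun _ => (s.card : ℝ)⁻¹) (p := p)
    (fun _ _ => by positivity) (by simp [hn.ne']) hp
  simp only [smul_eq_mul, ← Finset.mul_sum, negMulLog_mul (s.card : ℝ)⁻¹] at hJ
  rw [negMulLog, log_inv] at hJ
  have := mul_le_mul_of_nonneg_left hJ hn.le
  field_simp at this
  linarith

lemma Real.sum_negMulLog_le_log_card {ι : Type*} [Fintype ι] {p : ι → ℝ} (hp : ∀ i, 0 ≤ p i)
    (hp₁ : ∑ i, p i = 1) : ∑ i, negMulLog (p i) ≤ log (Fintype.card ι) := by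
  simpa [hp₁] using sum_negMulLog_le Finset.univ fun i _ => hp i

lemma Real.sum_negMulLog_le_binEntropy_add {ι : Type*} [Fintype ι] {p : ι → ℝ}
    (hp : ∀ i, 0 ≤ p i) (hp₁ : ∑ i, p i = 1) {δ : ℝ} (hδ : δ ≤ 1 / 2) {i₀ : ι}
    (hi₀ : 1 - δ ≤ p i₀) :
    ∑ i, negMulLog (p i) ≤ binEntropy δ + δ * log (Fintype.card ι) := by
  classical
  set e := ∑ i ∈ Finset.univ.erase i₀, p i
  have he : p i₀ = 1 - e := by
    rw [← hp₁, ← Finset.add_sum_erase _ _ (Finset.mem_univ i₀)]; ring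
  have he₀ : 0 ≤ e := Finset.sum_nonneg fun i _ => hp i
  have heδ : e ≤ δ := by linarith
  have hrest : ∑ i ∈ Finset.univ.erase i₀, negMulLog (p i) ≤
      negMulLog e + e * log (Fintype.card ι) := by
    have hlog : log (Finset.univ.erase i₀).card ≤ log (Fintype.card ι) := by
      rcases (Finset.univ.erase i₀).eq_empty_or_nonempty with h | h
      · simp [h, log_natCast_nonneg]
      · exact log_le_log (by exact_mod_cast h.card_pos) (by exact_mod_cast Finset.card_le_univ _)
    have := mul_le_mul_of_nonneg_left hlog he₀
    linarith [sum_negMulLog_le _ fun i (_ : i ∈ Finset.univ.erase i₀) => hp i]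
  have hbin : binEntropy e ≤ binEntropy δ :=
    binEntropy_strictMonoOn.monotoneOn ⟨he₀, by linarith⟩ ⟨he₀.trans heδ, by linarith⟩ heδ
  calc ∑ i, negMulLog (p i)
      = negMulLog (1 - e) + ∑ i ∈ Finset.univ.erase i₀, negMulLog (p i) := by
        rw [← he, Finset.add_sum_erase _ (fun i => negMulLog (p i)) (Finset.mem_univ i₀)]
    _ ≤ binEntropy e + e * log (Fintype.card ι) := by
        rw [binEntropy_eq_negMulLog_add_negMulLog_one_sub]; linarith
    _ ≤ binEntropy δ + δ * log (Fintype.card ι) := by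
        gcongr

section Posterior

variable {Ω W Y : Type*} [MeasurableSpace Ω] (μ : Measure Ω) (Wv : Ω → W) (Yv : Ω → ℕ → Y)

lemma post_nonneg (n : ℕ) (ω : Ω) (w : W) : 0 ≤ post μ Wv Yv n ω w :=
  div_nonneg ENNReal.toReal_nonneg ENNReal.toReal_nonneg

lemma post_le_one [IsFiniteMeasure μ] (n : ℕ) (ω : Ω) (w : W) : post μ Wv Yv n ω w ≤ 1 :=
  div_le_one_of_le₀ (ENNReal.toReal_mono (measure_ne_top μ _)
    (measure_mono Set.inter_subset_right)) ENNReal.toReal_nonneg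

lemma post_eq_zero_of_measure_histSet_eq_zero {n : ℕ} {ω : Ω} (h : μ (histSet Yv n ω) = 0)
    (w : W) : post μ Wv Yv n ω w = 0 := by
  simp [post, h]

lemma sum_post_eq_one [IsFiniteMeasure μ] [Fintype W] [MeasurableSpace W]
    [MeasurableSingletonClass W] (hWv : Measurable Wv) {n : ℕ} {ω : Ω}
    (h : μ (histSet Yv n ω) ≠ 0) : ∑ w, post μ Wv Yv n ω w = 1 := by
  set B := histSet Yv n ω
  have hmeas : ∀ w, MeasurableSet {ω' | Wv ω' = w} := fun w => hWv (measurableSet_singleton w)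
  have hdisj : Set.PairwiseDisjoint (Finset.univ : Finset W) fun w => {ω' | Wv ω' = w} :=
    fun _ _ _ _ hab => Set.disjoint_left.2 fun _ ha hb => hab (ha.symm.trans hb)
  -- Working in `μ.restrict B` needs only the fibres of `Wv`, not `B`, to be measurable.
  have hsum : ∑ w, μ ({ω' | Wv ω' = w} ∩ B) = μ B := by
    simp_rw [← Measure.restrict_apply (hmeas _)]
    rw [← measure_biUnion_finset hdisj fun w _ => hmeas w]
    have hU : (⋃ w, {ω' | Wv ω' = w}) = Set.univ := Set.iUnion_eq_univ_iff.2 fun ω' => ⟨_, rfl⟩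
    simp only [Finset.mem_univ, Set.iUnion_true, hU, Measure.restrict_apply_univ]
  unfold post
  rw [← Finset.sum_div, ← ENNReal.toReal_sum fun w _ => measure_ne_top μ _, hsum]
  exact div_self (ENNReal.toReal_ne_zero.2 ⟨h, measure_ne_top μ _⟩)

lemma postEnt_eq_sum_negMulLog [Fintype W] (n : ℕ) (ω : Ω) :
    postEnt μ Wv Yv n ω = ∑ w, negMulLog (post μ Wv Yv n ω w) := by
  simp [postEnt, negMulLog_eq_neg]

lemma postEnt_nonneg [IsFiniteMeasure μ] [Fintype W] (n : ℕ) (ω : Ω) :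
    0 ≤ postEnt μ Wv Yv n ω := by
  rw [postEnt_eq_sum_negMulLog]
  exact Finset.sum_nonneg fun w _ =>
    negMulLog_nonneg (post_nonneg μ Wv Yv n ω w) (post_le_one μ Wv Yv n ω w)

lemma peMap_nonneg [IsFiniteMeasure μ] [Fintype W] (n : ℕ) (ω : Ω) : 0 ≤ peMap μ Wv Yv n ω :=
  sub_nonneg.2 (Real.iSup_le (post_le_one μ Wv Yv n ω) zero_le_one)

lemma peMap_le_one [Fintype W] (n : ℕ) (ω : Ω) : peMap μ Wv Yv n ω ≤ 1 :=
  sub_le_self _ (Real.iSup_nonneg (post_nonneg μ Wv Yv n ω))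

variable [IsFiniteMeasure μ] [Fintype W] [MeasurableSpace W] [MeasurableSingletonClass W]

lemma postEnt_le_log_card (hWv : Measurable Wv) (n : ℕ) (ω : Ω) :
    postEnt μ Wv Yv n ω ≤ log (Fintype.card W) := by
  rw [postEnt_eq_sum_negMulLog]
  by_cases h : μ (histSet Yv n ω) = 0
  · simp [post_eq_zero_of_measure_histSet_eq_zero μ Wv Yv h, log_natCast_nonneg]
  · exact sum_negMulLog_le_log_card (post_nonneg μ Wv Yv n ω) (sum_post_eq_one μ Wv Yv hWv h)

lemma postEnt_le_of_peMap_le (hWv : Measurable Wv) {δ : ℝ} (hδ : δ ≤ 1 / 2) {n : ℕ} {ω : Ω}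
    (hpe : peMap μ Wv Yv n ω ≤ δ) :
    postEnt μ Wv Yv n ω ≤ binEntropy δ + δ * log (Fintype.card W) := by
  have h : μ (histSet Yv n ω) ≠ 0 := by
    intro h
    simp only [peMap, post_eq_zero_of_measure_histSet_eq_zero μ Wv Yv h, iSup_const_zero] at hpe
    linarith
  have hsum := sum_post_eq_one μ Wv Yv hWv h
  have : Nonempty W := by
    by_contra hW
    simp [not_nonempty_iff.1 hW] at hsum
  obtain ⟨w₀, hw₀⟩ : ∃ w₀, post μ Wv Yv n ω w₀ = ⨆ w, post μ Wv Yv n ω w :=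
    exists_eq_ciSup_of_finite
  rw [postEnt_eq_sum_negMulLog]
  exact sum_negMulLog_le_binEntropy_add (post_nonneg μ Wv Yv n ω) hsum hδ
    (by rw [hw₀]; exact sub_le_comm.1 hpe)

end Posterior

section Measurability

variable {Ω W Y : Type*} [MeasurableSpace Ω] [MeasurableSpace Y] [Countable Y]
  [MeasurableSingletonClass Y] (μ : Measure Ω) (Wv : Ω → W) {Yv : Ω → ℕ → Y}
  (hYv : ∀ i, Measurable fun ω => Yv ω i)
include hYv

lemma measurable_comp_histSet {β : Type*} [MeasurableSpace β] (G : Set Ω → β) (n : ℕ) :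
    Measurable fun ω => G (histSet Yv n ω) := by
  let past : Ω → Fin n → Y := fun ω i => Yv ω i
  have hpast : Measurable past := measurable_pi_lambda _ fun i => hYv i
  have hhist : ∀ ω, histSet Yv n ω = past ⁻¹' {past ω} := fun ω => by
    ext ω'
    simp only [histSet, Set.mem_ofPred_eq, Set.mem_preimage, Set.mem_singleton_iff, funext_iff,
      past, Fin.forall_iff]
  simp_rw [hhist]
  exact (measurable_of_countable fun v => G (past ⁻¹' {v})).comp hpast

lemma measurable_peMap [Fintype W] (n : ℕ) : Measurable (peMap μ Wv Yv n) :=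
  (measurable_comp_histSet hYv
    (fun B => 1 - ⨆ w, (μ ({ω' | Wv ω' = w} ∩ B)).toReal / (μ B).toReal) n :)

lemma measurable_peMap_comp [Fintype W] {T : Ω → ℕ} (hT : Measurable T) :
    Measurable fun ω => peMap μ Wv Yv (T ω) ω := by
  have h : Measurable fun p : Ω × ℕ => peMap μ Wv Yv p.2 p.1 :=
    measurable_from_prod_countable_left fun n => measurable_peMap μ Wv hYv n
  exact (h.comp (measurable_id.prodMk hT) :)

end Measurability

section StoppingTime

variable {Ω W Y : Type*} [MeasurableSpace Ω] (μ : Measure Ω) [Fintype W] (Wv : Ω → W)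
  (Yv : Ω → ℕ → Y) (T : Ω → ℕ)

lemma peMap_tauOf_le_or_tauOf_eq (δ : ℝ) (ω : Ω) :
    peMap μ Wv Yv (tauOf μ Wv Yv δ T ω) ω ≤ δ ∨ tauOf μ Wv Yv δ T ω = T ω :=
  Nat.sInf_mem (s := {n | peMap μ Wv Yv n ω ≤ δ ∨ n = T ω}) ⟨T ω, Or.inr rfl⟩

lemma postEnt_tauOf_le [IsFiniteMeasure μ] [MeasurableSpace W] [MeasurableSingletonClass W]
    (hWv : Measurable Wv) {δ : ℝ} (hδ0 : 0 < δ) (hδ : δ ≤ 1 / 2) (ω : Ω) :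
    postEnt μ Wv Yv (tauOf μ Wv Yv δ T ω) ω ≤
      binEntropy δ + δ * log (Fintype.card W) +
        peMap μ Wv Yv (T ω) ω / δ * log (Fintype.card W) := by
  have hlog : 0 ≤ log (Fintype.card W) := log_natCast_nonneg _
  have hrest : 0 ≤ peMap μ Wv Yv (T ω) ω / δ * log (Fintype.card W) :=
    mul_nonneg (div_nonneg (peMap_nonneg μ Wv Yv _ ω) hδ0.le) hlog
  rcases le_or_gt (peMap μ Wv Yv (tauOf μ Wv Yv δ T ω) ω) δ with hpe | hpe
  · linarith [postEnt_le_of_peMap_le μ Wv Yv hWv hδ hpe]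
  · have hτ := (peMap_tauOf_le_or_tauOf_eq μ Wv Yv T δ ω).resolve_left hpe.not_ge
    rw [hτ] at hpe ⊢
    have hone : log (Fintype.card W) ≤ peMap μ Wv Yv (T ω) ω / δ * log (Fintype.card W) :=
      le_mul_of_one_le_left hlog ((one_le_div hδ0).2 hpe.le)
    have hC : 0 ≤ binEntropy δ + δ * log (Fintype.card W) :=
      add_nonneg (binEntropy_nonneg hδ0.le (by linarith)) (mul_nonneg hδ0.le hlog)
    linarith [postEnt_le_log_card μ Wv Yv hWv (T ω) ω]

end StoppingTime

theorem stmt12_general {Ω W Y : Type*} {mΩ : MeasurableSpace Ω} (μ : Measure Ω)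
    [IsProbabilityMeasure μ]
    [Fintype W] [MeasurableSpace W] [MeasurableSingletonClass W]
    [Fintype Y] [MeasurableSpace Y] [MeasurableSingletonClass Y]
    (Wv : Ω → W) (hWv : Measurable Wv)
    (Yv : Ω → ℕ → Y) (hYv : ∀ i, Measurable fun ω => Yv ω i)
    (T : Ω → ℕ) (hT : Measurable T)
    (δ : ℝ) (hδ0 : 0 < δ) (hδ : δ ≤ 1 / 2) :
    ∫ ω, postEnt μ Wv Yv (tauOf μ Wv Yv δ T ω) ω ∂μ
      ≤ (-(δ * Real.log δ) - (1 - δ) * Real.log (1 - δ)) +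
        (δ + (∫ ω, peMap μ Wv Yv (T ω) ω ∂μ) / δ) * Real.log (Fintype.card W) := by
  set P := fun ω => peMap μ Wv Yv (T ω) ω
  have hP : Integrable P μ :=
    .of_bound (measurable_peMap_comp μ Wv hYv hT).aestronglyMeasurable 1
      (ae_of_all _ fun ω => by
        rw [Real.norm_of_nonneg (peMap_nonneg μ Wv Yv _ ω)]; exact peMap_le_one μ Wv Yv _ ω)
  have hbin : binEntropy δ = -(δ * log δ) - (1 - δ) * log (1 - δ) := by
    rw [binEntropy_eq_negMulLog_add_negMulLog_one_sub, negMulLog, negMulLog]; ring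
  calc ∫ ω, postEnt μ Wv Yv (tauOf μ Wv Yv δ T ω) ω ∂μ
      ≤ ∫ ω, (binEntropy δ + δ * log (Fintype.card W) + P ω / δ * log (Fintype.card W)) ∂μ :=
        integral_mono_of_nonneg (ae_of_all _ fun ω => postEnt_nonneg μ Wv Yv _ ω)
          (by fun_prop) (ae_of_all _ (postEnt_tauOf_le μ Wv Yv T hWv hδ0 hδ))
    _ = _ := by
        rw [integral_add (integrable_const _) (by fun_prop), integral_const, integral_mul_const,
          integral_div, hbin]
        simp only [probReal_univ, one_smul]
        ring

/-- With `τ` the first time the MAP error drops below `δ` (or `T` is reached), the expected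
posterior entropy at `τ` satisfies `E[H(Y^τ)] ≤ h(δ) + (δ + P_e/δ) ln M`, where
`P_e = E[P_e(Y^T)]` and `h` is the binary entropy function. -/
theorem stmt12 {Ω W Y : Type*} {mΩ : MeasurableSpace Ω} (μ : Measure Ω)
    [IsProbabilityMeasure μ]
    [Fintype W] [Nonempty W] [MeasurableSpace W] [MeasurableSingletonClass W]
    [Fintype Y] [MeasurableSpace Y] [MeasurableSingletonClass Y]
    (Wv : Ω → W) (hWv : Measurable Wv)
    (hunif : ∀ w : W, μ {ω | Wv ω = w} = (Fintype.card W : ℝ≥0∞)⁻¹)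
    (Yv : Ω → ℕ → Y) (hYv : ∀ i, Measurable fun ω => Yv ω i)
    (T : Ω → ℕ) (hT : Measurable T)
    (δ : ℝ) (hδ0 : 0 < δ) (hδ : δ ≤ 1 / 2) :
    ∫ ω, postEnt μ Wv Yv (tauOf μ Wv Yv δ T ω) ω ∂μ
      ≤ (-(δ * Real.log δ) - (1 - δ) * Real.log (1 - δ)) +
        (δ + (∫ ω, peMap μ Wv Yv (T ω) ω ∂μ) / δ) * Real.log (Fintype.card W) :=
  stmt12_general (mΩ := mΩ) μ Wv hWv Yv hYv T hT δ hδ0 hδ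
end
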